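/- arXiv:2308.07884 — 10 statements merged into one kernel-verified Lean document; each statement's English description precedes it below -/
import Mathlib

section
/- The Motzkin numbers M_n, defined by M_0 = 1 and M_{n+1} = M_n + sum_{k=0}^{n-1} M_k * M_{n-1-k}, count Motzkin paths: M_n equals the number of sequences of n steps from {U, D, F} (U=+1, D=-1, F=0) whose partial sums are all nonnegative and whose total sum is 0. -/
/-!
A nonempty Motzkin path either starts with a flat step followed by a Motzkin path, or it starts
with an up step and splits uniquely at its first return to height zero as `1 :: (a ++ -1 :: b)`
with `a`, `b` Motzkin paths. Writing `P k` for the paths of length `k`, this is a bijection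
`P n ⊕ Σ k < n, P k × P (n - 1 - k) ≃ P (n + 1)`, so the numbers of paths satisfy the Motzkin
recurrence.
-/

def IsMotzkinPath (l : List ℤ) : Prop :=
  (∀ x ∈ l, x = -1 ∨ x = 0 ∨ x = 1) ∧ (∀ k, 0 ≤ (l.take k).sum) ∧ l.sum = 0

/-- `a ++ [-1]` is the part of `t` up to the first time that the walk started at height `h`
goes below zero. -/
theorem exists_eq_append_neg_one_cons_of_add_sum_take_neg {h : ℤ} (hh : 0 ≤ h) {t : List ℤ}
    (hstep : ∀ x ∈ t, x = -1 ∨ x = 0 ∨ x = 1) (hneg : ∃ k, h + (t.take k).sum < 0) :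
    ∃ a b, t = a ++ -1 :: b ∧ h + a.sum = 0 ∧ ∀ k, 0 ≤ h + (a.take k).sum := by
  induction t generalizing h with
  | nil => simp only [List.take_nil, List.sum_nil, add_zero, exists_const] at hneg; omega
  | cons x t ih =>
    have hx := hstep x List.mem_cons_self
    by_cases hfirst : h + x < 0
    · exact ⟨[], t, by congr; omega, by simp; omega, by simpa⟩
    obtain ⟨a, b, rfl, hsum, hpre⟩ : ∃ a b, t = a ++ -1 :: b ∧ h + x + a.sum = 0 ∧
        ∀ k, 0 ≤ h + x + (a.take k).sum := by
      refine ih (by omega) (fun y hy => hstep y (List.mem_cons_of_mem x hy)) ?_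
      obtain ⟨_ | k, hk⟩ := hneg
      · simp only [List.take_zero, List.sum_nil, add_zero] at hk; omega
      · exact ⟨k, by simp only [List.take_succ_cons, List.sum_cons] at hk; linarith⟩
    refine ⟨x :: a, b, rfl, by simp only [List.sum_cons]; linarith, fun k => ?_⟩
    cases k with
    | zero => simpa
    | succ k => simpa [← add_assoc] using hpre k

theorem length_le_of_append_neg_one_cons_eq {a a' b b' : List ℤ} (ha : a.sum = 0)
    (ha' : ∀ k, 0 ≤ (a'.take k).sum) (h : a ++ -1 :: b = a' ++ -1 :: b') :
    a'.length ≤ a.length := by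
  by_contra! hlt
  have key : (a'.take (a.length + 1)).sum = a.sum - 1 := by
    rw [← List.take_append_of_le_length (show a.length + 1 ≤ a'.length from hlt), ← h,
      List.take_length_add_append]
    simp [sub_eq_add_neg]
  linarith [ha' (a.length + 1)]

namespace IsMotzkinPath

variable {a b l t : List ℤ}

theorem nil : IsMotzkinPath [] := ⟨by simp, by simp, rfl⟩

theorem zero_cons (h : IsMotzkinPath l) : IsMotzkinPath (0 :: l) := by
  obtain ⟨hstep, hpre, hsum⟩ := h
  refine ⟨by simpa using hstep, fun k => ?_, by simpa using hsum⟩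
  cases k with
  | zero => simp
  | succ k => simpa using hpre k

theorem of_zero_cons (h : IsMotzkinPath (0 :: l)) : IsMotzkinPath l := by
  obtain ⟨hstep, hpre, hsum⟩ := h
  exact ⟨fun x hx => hstep x (List.mem_cons_of_mem 0 hx), fun k => by simpa using hpre (k + 1),
    by simpa using hsum⟩

theorem one_cons_append_neg_one_cons (ha : IsMotzkinPath a) (hb : IsMotzkinPath b) :
    IsMotzkinPath (1 :: (a ++ -1 :: b)) := by
  obtain ⟨ha_step, ha_pre, ha_sum⟩ := ha
  obtain ⟨hb_step, hb_pre, hb_sum⟩ := hb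
  refine ⟨?_, fun k => ?_, by simp [ha_sum, hb_sum]⟩
  · simp only [List.mem_cons, List.mem_append]
    rintro x (rfl | hx | rfl | hx) <;> simp_all
  cases k with
  | zero => simp
  | succ k =>
    have hb_pre' : ∀ m, -1 ≤ ((-1 :: b).take m).sum := by
      rintro (_ | m)
      · simp
      · simpa using hb_pre m
    simp only [List.take_succ_cons, List.sum_cons, List.take_append, List.sum_append]
    linarith [ha_pre k, hb_pre' (k - a.length)]

theorem head_eq_zero_or_eq_one {x : ℤ} (h : IsMotzkinPath (x :: t)) : x = 0 ∨ x = 1 := by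
  have hx : 0 ≤ x := by simpa using h.2.1 1
  rcases h.1 x List.mem_cons_self with hx' | hx' | hx' <;> omega

theorem exists_eq_append_of_one_cons (h : IsMotzkinPath (1 :: t)) :
    ∃ a b, IsMotzkinPath a ∧ IsMotzkinPath b ∧ t = a ++ -1 :: b := by
  obtain ⟨hstep, hpre, hsum⟩ := h
  have ht_step : ∀ x ∈ t, x = -1 ∨ x = 0 ∨ x = 1 := fun x hx => hstep x (List.mem_cons_of_mem 1 hx)
  obtain ⟨a, b, rfl, ha_sum, ha_pre⟩ := exists_eq_append_neg_one_cons_of_add_sum_take_neg le_rfl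
    ht_step ⟨t.length, by simp only [List.sum_cons] at hsum; simp; omega⟩
  simp only [zero_add] at ha_sum ha_pre
  refine ⟨a, b, ⟨fun x hx => ht_step x (by simp [hx]), ha_pre, ha_sum⟩,
    ⟨fun x hx => ht_step x (by simp [hx]), fun k => ?_, by simp at hsum; linarith⟩, rfl⟩
  have := hpre (a.length + 1 + k + 1)
  simp only [List.take_succ_cons, List.sum_cons, List.take_append] at this
  rw [List.take_of_length_le (by omega), show a.length + 1 + k - a.length = k + 1 by omega] at this
  simpa [ha_sum] using this

theorem append_neg_one_cons_inj {a' b' : List ℤ} (ha : IsMotzkinPath a) (ha' : IsMotzkinPath a')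
    (h : a ++ -1 :: b = a' ++ -1 :: b') : a = a' ∧ b = b' := by
  obtain ⟨rfl, hb⟩ := List.append_inj h <| le_antisymm
    (length_le_of_append_neg_one_cons_eq ha'.2.2 ha.2.1 h.symm)
    (length_le_of_append_neg_one_cons_eq ha.2.2 ha'.2.1 h)
  exact ⟨rfl, List.cons_injective hb⟩

end IsMotzkinPath

theorem isMotzkinPath_ofFn_iff {n : ℕ} (s : Fin n → ℤ) :
    IsMotzkinPath (List.ofFn s) ↔ (∀ i, s i = -1 ∨ s i = 0 ∨ s i = 1) ∧
      (∀ m : ℕ, 0 ≤ ∑ i ∈ Finset.univ.filter (fun i : Fin n => (i : ℕ) < m), s i) ∧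
      (∑ i, s i) = 0 := by
  simp only [IsMotzkinPath, List.forall_mem_ofFn_iff, List.sum_take_ofFn, List.sum_ofFn]

abbrev MotzkinPath (n : ℕ) := {l : List ℤ // l.length = n ∧ IsMotzkinPath l}

namespace MotzkinPath

def equivOfFn (n : ℕ) : {s : Fin n → ℤ // IsMotzkinPath (List.ofFn s)} ≃ MotzkinPath n :=
  ((Equiv.vectorEquivFin ℤ n).symm.subtypeEquiv fun s => by
    rw [← List.Vector.toList_ofFn]; rfl).trans
    (Equiv.subtypeSubtypeEquivSubtypeInter _ IsMotzkinPath)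

instance (n : ℕ) : Finite (MotzkinPath n) := by
  have : Finite {s : Fin n → ℤ // IsMotzkinPath (List.ofFn s)} :=
    Set.Finite.to_subtype <| (Set.Finite.pi fun _ => Set.finite_Icc (-1 : ℤ) 1).subset
      fun s hs i _ => by rcases hs.1 (s i) (List.mem_ofFn.2 ⟨i, rfl⟩) with h | h | h <;> simp [h]
  exact Finite.of_equiv _ (equivOfFn n)

def glue (n : ℕ) :
    MotzkinPath n ⊕ (Σ k : Fin n, MotzkinPath k × MotzkinPath (n - 1 - k)) → MotzkinPath (n + 1)
  | .inl l => ⟨0 :: l.1, by simp [l.2.1], l.2.2.zero_cons⟩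
  | .inr ⟨k, a, b⟩ => ⟨1 :: (a.1 ++ -1 :: b.1), by
      simp only [List.length_cons, List.length_append, a.2.1, b.2.1, Nat.add_right_cancel_iff]
      omega,
      a.2.2.one_cons_append_neg_one_cons b.2.2⟩

theorem glue_injective (n : ℕ) : Function.Injective (glue n) := by
  rintro (l | ⟨k, a, b⟩) (l' | ⟨k', a', b'⟩) h <;>
    simp only [glue, Subtype.ext_iff, List.cons.injEq, true_and, zero_ne_one, one_ne_zero,
      false_and] at h
  · exact congrArg Sum.inl (Subtype.ext h)
  · obtain ⟨ha, hb⟩ := a.2.2.append_neg_one_cons_inj a'.2.2 h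
    obtain rfl : k = k' := Fin.ext (by rw [← a.2.1, ← a'.2.1, ha])
    rw [Subtype.ext ha, Subtype.ext hb]

theorem glue_surjective (n : ℕ) : Function.Surjective (glue n) := by
  rintro ⟨_ | ⟨x, t⟩, hlen, hpath⟩
  · simp at hlen
  rcases hpath.head_eq_zero_or_eq_one with rfl | rfl
  · exact ⟨.inl ⟨t, by simpa using hlen, hpath.of_zero_cons⟩, rfl⟩
  · obtain ⟨a, b, ha, hb, rfl⟩ := hpath.exists_eq_append_of_one_cons
    simp only [List.length_cons, List.length_append, Nat.add_right_cancel_iff] at hlen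
    exact ⟨.inr ⟨⟨a.length, by omega⟩, ⟨a, rfl, ha⟩, ⟨b, by simp only; omega, hb⟩⟩, rfl⟩

theorem card_zero : Nat.card (MotzkinPath 0) = 1 := by
  rw [Nat.card_eq_one_iff_exists]
  exact ⟨⟨[], rfl, .nil⟩, fun l => Subtype.ext (List.eq_nil_of_length_eq_zero l.2.1)⟩

theorem card_succ (n : ℕ) : Nat.card (MotzkinPath (n + 1)) = Nat.card (MotzkinPath n) +
    ∑ k ∈ Finset.range n, Nat.card (MotzkinPath k) * Nat.card (MotzkinPath (n - 1 - k)) := by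
  rw [← Nat.card_eq_of_bijective _ ⟨glue_injective n, glue_surjective n⟩, Nat.card_sum,
    Nat.card_sigma, Finset.sum_range]
  simp [Nat.card_prod]

end MotzkinPath

/-- Motzkin numbers count Motzkin paths. -/
theorem motzkin_numbers_count_motzkin_paths
    (M : ℕ → ℕ) (h0 : M 0 = 1)
    (hrec : ∀ n, M (n + 1) = M n + ∑ k ∈ Finset.range n, M k * M (n - 1 - k))
    (n : ℕ) :
    M n = Nat.card {s : Fin n → ℤ //
      (∀ i, s i = -1 ∨ s i = 0 ∨ s i = 1) ∧
      (∀ m : ℕ, 0 ≤ ∑ i ∈ Finset.univ.filter (fun i : Fin n => (i : ℕ) < m), s i) ∧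
      (∑ i, s i) = 0} := by
  simp only [← isMotzkinPath_ofFn_iff]
  rw [Nat.card_congr (MotzkinPath.equivOfFn n)]
  induction n using Nat.strong_induction_on with
  | _ n ih =>
    cases n with
    | zero => rw [h0, MotzkinPath.card_zero]
    | succ n =>
      rw [hrec, MotzkinPath.card_succ, ih n n.lt_succ_self]
      congr 1
      refine Finset.sum_congr rfl fun k hk => ?_
      rw [Finset.mem_range] at hk
      rw [ih k (by omega), ih (n - 1 - k) (by omega)]
end

section
/- For each k ≥ 0, the number of paths of length n with steps U=+1, D=-1, F=0, starting at height 0, staying nonnegative, and ending at height k, has generating function z^k · M(z)^{k+1}, where M is the Motzkin generating function. -/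
/-!
Removing the last step of a path ending at height `k ≥ 0` leaves a path ending at `k + 1`, `k` or
`k - 1`, so the counts `p n k` satisfy `p (n + 1) k = p n (k + 1) + p n k + p n (k - 1)`, with
`p n (-1) = 0` and `p 0 k = [k = 0]`. On the other side, `F k = X ^ k * M ^ (k + 1)` satisfies
`F k = X ^ k * M ^ k * (1 + X * M + X ^ 2 * M ^ 2) = X ^ k * M ^ k + X * (F (k + 1) + F k)`, and
`X ^ k * M ^ k` is `1` for `k = 0` and `X * F (k - 1)` otherwise: the coefficients of the `F k` obey
the same recursion with the same initial values.
-/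

open PowerSeries Finset

def IsStep (e : ℤ) : Prop := e = -1 ∨ e = 0 ∨ e = 1

def prefixSum {n : ℕ} (s : Fin n → ℤ) (m : ℕ) : ℤ :=
  ∑ i ∈ univ.filter (fun i : Fin n => (i : ℕ) < m), s i

def IsNonnegPath {n : ℕ} (s : Fin n → ℤ) (k : ℤ) : Prop :=
  (∀ i, IsStep (s i)) ∧ (∀ m, 0 ≤ prefixSum s m) ∧ ∑ i, s i = k

abbrev NonnegPath (n : ℕ) (k : ℤ) : Type := {s : Fin n → ℤ // IsNonnegPath s k}

theorem Nat.card_eq_sum_card_fiber {α β : Type*} [Finite α] [DecidableEq β] (f : α → β)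
    (t : Finset β) (hf : ∀ a, f a ∈ t) : Nat.card α = ∑ b ∈ t, Nat.card {a // f a = b} := by
  classical
  have := Fintype.ofFinite α
  rw [Nat.card_eq_fintype_card, ← Finset.card_univ, card_eq_sum_card_fiberwise fun a _ => hf a]
  refine sum_congr rfl fun b _ => ?_
  rw [Nat.card_eq_fintype_card, Fintype.card_subtype]

theorem prefixSum_of_le {n m : ℕ} (s : Fin n → ℤ) (hm : n ≤ m) : prefixSum s m = ∑ i, s i := by
  rw [prefixSum, filter_true_of_mem fun i _ => i.isLt.trans_le hm]

theorem prefixSum_snoc {n : ℕ} (t : Fin n → ℤ) (e : ℤ) (m : ℕ) :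
    prefixSum (Fin.snoc t e : Fin (n + 1) → ℤ) m = prefixSum t m + if n < m then e else 0 := by
  simp only [prefixSum, sum_filter, Fin.sum_univ_castSucc, Fin.snoc_castSucc, Fin.snoc_last,
    Fin.val_castSucc, Fin.val_last]

theorem prefixSum_snoc_nonneg_iff {n : ℕ} (t : Fin n → ℤ) (e : ℤ) :
    (∀ m, 0 ≤ prefixSum (Fin.snoc t e : Fin (n + 1) → ℤ) m) ↔
      (∀ m, 0 ≤ prefixSum t m) ∧ 0 ≤ ∑ i, t i + e := by
  simp only [prefixSum_snoc]
  refine ⟨fun h => ⟨fun m => ?_, ?_⟩, fun ⟨ht, hlast⟩ m => ?_⟩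
  · by_cases hm : n < m
    · simpa [prefixSum_of_le t hm.le, prefixSum_of_le t le_rfl] using h n
    · simpa [hm] using h m
  · simpa [prefixSum_of_le t n.le_succ] using h (n + 1)
  · by_cases hm : n < m
    · simpa [hm, prefixSum_of_le t hm.le] using hlast
    · simpa [hm] using ht m

theorem isNonnegPath_snoc_iff {n : ℕ} (t : Fin n → ℤ) (e k : ℤ) :
    IsNonnegPath (Fin.snoc t e : Fin (n + 1) → ℤ) k ↔
      IsStep e ∧ IsNonnegPath t (k - e) ∧ 0 ≤ k := by
  simp only [IsNonnegPath, Fin.forall_fin_succ', Fin.snoc_castSucc, Fin.snoc_last,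
    prefixSum_snoc_nonneg_iff, Fin.sum_snoc]
  constructor
  · rintro ⟨⟨hsteps, he⟩, ⟨hpre, hk⟩, hsum⟩
    exact ⟨he, ⟨hsteps, hpre, by omega⟩, by omega⟩
  · rintro ⟨he, ⟨hsteps, hpre, hsum⟩, hk⟩
    exact ⟨⟨hsteps, he⟩, ⟨hpre, by omega⟩, by omega⟩

theorem IsNonnegPath.nonneg {n : ℕ} {s : Fin n → ℤ} {k : ℤ} (h : IsNonnegPath s k) : 0 ≤ k := by
  simpa [prefixSum_of_le s le_rfl, h.2.2] using h.2.1 n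

instance (n : ℕ) (k : ℤ) : Finite (NonnegPath n k) :=
  Finite.of_injective (fun s i => (⟨s.1 i, s.2.1 i⟩ : ({-1, 0, 1} : Set ℤ)))
    fun _ _ h => Subtype.ext <| funext fun i => congrArg Subtype.val (congrFun h i)

def nonnegPathLastEquiv (n : ℕ) {k : ℤ} (hk : 0 ≤ k) {e : ℤ} (he : IsStep e) :
    {s : NonnegPath (n + 1) k // s.1 (Fin.last n) = e} ≃ NonnegPath n (k - e) where
  toFun s := ⟨Fin.init s.1.1, by
    have h := s.1.2
    rw [← Fin.snoc_init_self s.1.1, s.2, isNonnegPath_snoc_iff] at h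
    exact h.2.1⟩
  invFun t :=
    ⟨⟨Fin.snoc t.1 e, (isNonnegPath_snoc_iff _ _ _).2 ⟨he, t.2, hk⟩⟩, Fin.snoc_last (α := fun _ => ℤ) _ _⟩
  left_inv s := by
    ext1; ext1
    simp only [← s.2, Fin.snoc_init_self]
  right_inv t := Subtype.ext (Fin.init_snoc (α := fun _ => ℤ) _ _)

theorem isNonnegPath_zero_iff (s : Fin 0 → ℤ) (k : ℤ) : IsNonnegPath s k ↔ k = 0 := by
  simp [IsNonnegPath, prefixSum, eq_comm]

theorem card_nonnegPath_zero (k : ℤ) : Nat.card (NonnegPath 0 k) = if k = 0 then 1 else 0 := by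
  rw [Nat.card_congr (Equiv.subtypeEquivRight fun s => isNonnegPath_zero_iff s k)]
  split_ifs with hk <;> simp [hk]

theorem card_nonnegPath_of_neg (n : ℕ) {k : ℤ} (hk : k < 0) : Nat.card (NonnegPath n k) = 0 := by
  have : IsEmpty (NonnegPath n k) := ⟨fun s => (s.2.nonneg.trans_lt hk).false⟩
  exact Nat.card_of_isEmpty

theorem card_nonnegPath_succ (n : ℕ) {k : ℤ} (hk : 0 ≤ k) :
    Nat.card (NonnegPath (n + 1) k) =
      Nat.card (NonnegPath n (k + 1)) + Nat.card (NonnegPath n k) +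
        Nat.card (NonnegPath n (k - 1)) := by
  have hsteps : ∀ s : NonnegPath (n + 1) k, s.1 (Fin.last n) ∈ ({-1, 0, 1} : Finset ℤ) := by
    intro s; simpa [IsStep] using s.2.1 (Fin.last n)
  rw [Nat.card_eq_sum_card_fiber _ _ hsteps, sum_congr rfl fun e he =>
    Nat.card_congr (nonnegPathLastEquiv n hk (by simpa [IsStep] using he))]
  simp [add_assoc]

theorem card_nonnegPath_natCast_succ (n k : ℕ) :
    Nat.card (NonnegPath (n + 1) k) =
      Nat.card (NonnegPath n (k + 1 : ℕ)) + Nat.card (NonnegPath n k) +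
        if k = 0 then 0 else Nat.card (NonnegPath n (k - 1 : ℕ)) := by
  rw [card_nonnegPath_succ n k.cast_nonneg]
  rcases k with _ | j
  · simp [card_nonnegPath_of_neg]
  · simp

section MotzkinSeries

variable {R : Type*} [CommSemiring R] {M : R⟦X⟧} (hM : M = 1 + X * M + X ^ 2 * M ^ 2)
include hM

theorem coeff_zero_X_pow_mul_pow (k : ℕ) :
    coeff 0 (X ^ k * M ^ (k + 1)) = if k = 0 then 1 else 0 := by
  rcases k with _ | j
  · rw [zero_add, pow_zero, one_mul, pow_one, hM]
    simp
  · simp [pow_succ', mul_assoc]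

theorem coeff_succ_X_pow_mul_pow (n k : ℕ) :
    coeff (n + 1) (X ^ k * M ^ (k + 1)) =
      coeff n (X ^ (k + 1) * M ^ (k + 1 + 1)) + coeff n (X ^ k * M ^ (k + 1)) +
        if k = 0 then 0 else coeff n (X ^ (k - 1) * M ^ (k - 1 + 1)) := by
  have hF : X ^ k * M ^ (k + 1) =
      X ^ k * M ^ k + X * (X ^ (k + 1) * M ^ (k + 1 + 1) + X ^ k * M ^ (k + 1)) :=
    calc X ^ k * M ^ (k + 1) = X ^ k * M ^ k * M := by ring
      _ = X ^ k * M ^ k * (1 + X * M + X ^ 2 * M ^ 2) := by rw [← hM]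
      _ = _ := by ring
  have hlower : coeff (n + 1) (X ^ k * M ^ k) =
      if k = 0 then 0 else coeff n (X ^ (k - 1) * M ^ (k - 1 + 1)) := by
    rcases k with _ | j
    · simp [coeff_one]
    · rw [pow_succ', mul_assoc, coeff_succ_X_mul]
      simp
  conv_lhs => rw [hF, map_add, coeff_succ_X_mul, hlower, map_add]
  ring

theorem card_nonnegPath_eq_coeff (n k : ℕ) :
    (Nat.card (NonnegPath n k) : R) = coeff n (X ^ k * M ^ (k + 1)) := by
  induction n generalizing k with
  | zero => simp [card_nonnegPath_zero, coeff_zero_X_pow_mul_pow hM]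
  | succ n ih =>
    rw [card_nonnegPath_natCast_succ, coeff_succ_X_pow_mul_pow hM, Nat.cast_add, Nat.cast_add,
      Nat.cast_ite, Nat.cast_zero, ih, ih, ih]

end MotzkinSeries

theorem paths_ending_at_level_k_gf_general
    (M : PowerSeries ℚ)
    (hM : M = 1 + X * M + X ^ 2 * M ^ 2)
    (k : ℕ) :
    PowerSeries.mk (fun n =>
      (Nat.card {s : Fin n → ℤ //
        (∀ i, s i = -1 ∨ s i = 0 ∨ s i = 1) ∧
        (∀ m : ℕ, 0 ≤ ∑ i ∈ Finset.univ.filter (fun i : Fin n => (i : ℕ) < m), s i) ∧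
        (∑ i, s i) = (k : ℤ)} : ℚ)) = X ^ k * M ^ (k + 1) := by
  ext n
  rw [coeff_mk]
  exact card_nonnegPath_eq_coeff hM n k

/-- Nonnegative paths of length n ending at level k have generating function z^k·M^{k+1}. -/
theorem paths_ending_at_level_k_gf
    (M : PowerSeries ℚ)
    (hM0 : constantCoeff M = 1)
    (hM : M = 1 + X * M + X ^ 2 * M ^ 2)
    (k : ℕ) :
    PowerSeries.mk (fun n =>
      (Nat.card {s : Fin n → ℤ //
        (∀ i, s i = -1 ∨ s i = 0 ∨ s i = 1) ∧
        (∀ m : ℕ, 0 ≤ ∑ i ∈ Finset.univ.filter (fun i : Fin n => (i : ℕ) < m), s i) ∧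
        (∑ i, s i) = (k : ℤ)} : ℚ)) = X ^ k * M ^ (k + 1) :=
  paths_ending_at_level_k_gf_general M hM k
end

section
/- The generating function of Grand Motzkin paths (paths with steps +1, -1, 0 from height 0 back to height 0, with no nonnegativity constraint) equals Σ_{k≥0} z^{2k} M(z)^{2k+1}, where M is the Motzkin generating function. -/
/-!
Let `W j` be the generating function of walks with steps `-1, 0, 1` from `0` to height `j`.
Splitting off the first step gives `W j = [j = 0] + z (W (j + 1) + W j + W (j - 1))`, a system
with a unique power series solution. By the Motzkin equation it is also solved by
`C (z M) ^ |j|` with `C = 1 / (1 - z - 2 z² M)` (a walk to `j` is a walk back to `0` followed by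
`|j|` blocks "step towards `j`, then a Motzkin path"), so `W 0 = C = M / (1 - z² M²)`, which is
`∑ₖ z^(2k) M^(2k+1)`; the terms with `2k > n` do not reach the coefficient of `zⁿ`.
-/

open PowerSeries Finset

section Walks

variable {α : Type*} [AddCommGroup α] {R : Type*} [CommRing R] {S : Finset α}

theorem eq_zero_of_forall_eq_X_mul_sum {D : α → R⟦X⟧} (hD : ∀ a, D a = X * ∑ x ∈ S, D (a - x)) :
    D = 0 := by
  suffices ∀ n a, coeff n (D a) = 0 from funext fun a => ext fun n => this n a
  intro n
  induction n with
  | zero => intro a; rw [hD, coeff_zero_X_mul]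
  | succ n ih => intro a; simp [hD a, coeff_succ_X_mul, map_sum, ih]

variable [DecidableEq α] (S)

def numWalks (n : ℕ) (a : α) : ℕ :=
  #{s ∈ Fintype.piFinset fun _ : Fin n => S | ∑ i, s i = a}

theorem natCard_eq_numWalks (n : ℕ) (a : α) :
    Nat.card {s : Fin n → α // (∀ i, s i ∈ S) ∧ ∑ i, s i = a} = numWalks S n a := by
  rw [numWalks, ← Nat.card_eq_finsetCard]
  exact Nat.card_congr (Equiv.subtypeEquivRight fun s => by simp [Fintype.mem_piFinset])

theorem numWalks_zero (a : α) : numWalks S 0 a = if a = 0 then 1 else 0 := by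
  split_ifs with ha <;> simp [numWalks, ha, eq_comm]

theorem numWalks_succ (n : ℕ) (a : α) :
    numWalks S (n + 1) a = ∑ x ∈ S, numWalks S n (a - x) := by
  simp only [numWalks]
  rw [← card_sigma]
  refine card_bij' (fun s _ => ⟨s 0, Fin.tail s⟩) (fun p _ => Fin.cons p.1 p.2) ?_ ?_ ?_ ?_
  · intro s hs
    simp_all [Fin.sum_univ_succ, Fintype.mem_piFinset, Fin.tail, eq_sub_iff_add_eq']
  · intro p hp
    simp_all [Fin.sum_univ_succ, Fintype.mem_piFinset, Fin.forall_fin_succ, eq_sub_iff_add_eq']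
  · simp
  · simp

variable (R)

noncomputable def walkSeries (a : α) : R⟦X⟧ :=
  mk fun n => (numWalks S n a : R)

theorem walkSeries_eq (a : α) :
    walkSeries R S a = (if a = 0 then 1 else 0) + X * ∑ x ∈ S, walkSeries R S (a - x) := by
  ext (_ | n)
  · simp [walkSeries, numWalks_zero]
  · simp [walkSeries, numWalks_succ, apply_ite (coeff (n + 1)), coeff_one, map_sum]

variable {S R}

theorem eq_walkSeries {F : α → R⟦X⟧}
    (hF : ∀ a, F a = (if a = 0 then 1 else 0) + X * ∑ x ∈ S, F (a - x)) :
    F = walkSeries R S := by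
  refine sub_eq_zero.mp (eq_zero_of_forall_eq_X_mul_sum (S := S) fun a => ?_)
  simp only [Pi.sub_apply, sum_sub_distrib]
  linear_combination hF a - walkSeries_eq R S a

end Walks

section Motzkin

variable {K : Type*} [Field K] {M : K⟦X⟧}

theorem walkSeries_eq_inv_mul_pow_natAbs (hM : M = 1 + X * M + X ^ 2 * M ^ 2) (j : ℤ) :
    walkSeries K {-1, 0, 1} j = (1 - X - 2 * X ^ 2 * M)⁻¹ * (X * M) ^ j.natAbs := by
  set C := (1 - X - 2 * X ^ 2 * M)⁻¹
  refine (congrFun (eq_walkSeries (F := fun j : ℤ => C * (X * M) ^ j.natAbs) fun j => ?_) j).symm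
  have hC : (1 - X - 2 * X ^ 2 * M) * C = 1 := PowerSeries.mul_inv_cancel _ (by simp)
  have hstep (m : ℕ) : C * (X * M) ^ (m + 1) =
      X * (C * (X * M) ^ m + C * (X * M) ^ (m + 1) + C * (X * M) ^ (m + 2)) := by
    linear_combination (X * C * (X * M) ^ m) * hM
  rw [sum_insert (by decide), sum_insert (by decide), sum_singleton]
  simp only [sub_neg_eq_add, sub_zero]
  rcases lt_trichotomy j 0 with hj | rfl | hj
  · obtain ⟨m, hm⟩ : ∃ m, j.natAbs = m + 1 := ⟨j.natAbs - 1, by omega⟩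
    rw [if_neg hj.ne, hm, show (j + 1).natAbs = m by omega, show (j - 1).natAbs = m + 2 by omega]
    linear_combination hstep m
  · simp only [if_pos, Int.natAbs_zero, zero_add, zero_sub, Int.natAbs_neg, Int.natAbs_one]
    linear_combination hC
  · obtain ⟨m, hm⟩ : ∃ m, j.natAbs = m + 1 := ⟨j.natAbs - 1, by omega⟩
    rw [if_neg hj.ne', hm, show (j - 1).natAbs = m by omega, show (j + 1).natAbs = m + 2 by omega]
    linear_combination hstep m

theorem sum_range_X_pow_mul_pow (hM : M = 1 + X * M + X ^ 2 * M ^ 2) (N : ℕ) :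
    ∑ k ∈ range N, X ^ (2 * k) * M ^ (2 * k + 1) =
      (1 - (X * M) ^ (2 * N)) * (1 - X - 2 * X ^ 2 * M)⁻¹ := by
  set C := (1 - X - 2 * X ^ 2 * M)⁻¹
  have hC : (1 - X - 2 * X ^ 2 * M) * C = 1 := PowerSeries.mul_inv_cancel _ (by simp)
  have hMC : M = (1 - (X * M) ^ 2) * C := by linear_combination C * hM - M * hC
  calc ∑ k ∈ range N, X ^ (2 * k) * M ^ (2 * k + 1)
      = (∑ k ∈ range N, ((X * M) ^ 2) ^ k) * M := by
        rw [sum_mul]; exact sum_congr rfl fun k _ => by ring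
    _ = (∑ k ∈ range N, ((X * M) ^ 2) ^ k) * (1 - (X * M) ^ 2) * C := by rw [mul_assoc, ← hMC]
    _ = (1 - (X * M) ^ (2 * N)) * C := by rw [geom_sum_mul_neg, pow_mul]

theorem coeff_sum_range_X_pow_mul_pow (hM : M = 1 + X * M + X ^ 2 * M ^ 2) {n N : ℕ}
    (hn : n < 2 * N) :
    coeff n (∑ k ∈ range N, X ^ (2 * k) * M ^ (2 * k + 1)) =
      coeff n (1 - X - 2 * X ^ 2 * M)⁻¹ := by
  rw [sum_range_X_pow_mul_pow hM, sub_mul, one_mul, map_sub, mul_pow, mul_assoc (X ^ (2 * N)),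
    coeff_X_pow_mul', if_neg (by omega), sub_zero]

end Motzkin

theorem grand_motzkin_gf_general
    (M : PowerSeries ℚ)
    (hM : M = 1 + X * M + X ^ 2 * M ^ 2) :
    ∀ n : ℕ,
      (coeff (R := ℚ) n) (PowerSeries.mk (fun n =>
        (Nat.card {s : Fin n → ℤ //
          (∀ i, s i = -1 ∨ s i = 0 ∨ s i = 1) ∧ (∑ i, s i) = 0} : ℚ)))
        = ∑ k ∈ Finset.range (n + 1), (coeff (R := ℚ) n) (X ^ (2 * k) * M ^ (2 * k + 1)) := by
  intro n
  have hcard : Nat.card {s : Fin n → ℤ // (∀ i, s i = -1 ∨ s i = 0 ∨ s i = 1) ∧ ∑ i, s i = 0} =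
      numWalks ({-1, 0, 1} : Finset ℤ) n 0 := by
    simp only [← natCard_eq_numWalks, mem_insert, mem_singleton]
  calc coeff n (mk fun n => (Nat.card {s : Fin n → ℤ //
          (∀ i, s i = -1 ∨ s i = 0 ∨ s i = 1) ∧ ∑ i, s i = 0} : ℚ))
      = coeff n (walkSeries ℚ ({-1, 0, 1} : Finset ℤ) 0) := by rw [coeff_mk, hcard, walkSeries, coeff_mk]
    _ = coeff n (1 - X - 2 * X ^ 2 * M)⁻¹ := by
        rw [walkSeries_eq_inv_mul_pow_natAbs hM, Int.natAbs_zero, pow_zero, mul_one]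
    _ = _ := by rw [← map_sum, coeff_sum_range_X_pow_mul_pow hM (by omega)]

/-- The generating function of Grand Motzkin paths equals Σ_{k≥0} z^{2k} M^{2k+1}
(coefficientwise: only terms with 2k ≤ n contribute to the n-th coefficient). -/
theorem grand_motzkin_gf
    (M : PowerSeries ℚ)
    (hM0 : constantCoeff (R := ℚ) M = 1)
    (hM : M = 1 + X * M + X ^ 2 * M ^ 2) :
    ∀ n : ℕ,
      (coeff (R := ℚ) n) (PowerSeries.mk (fun n =>
        (Nat.card {s : Fin n → ℤ //
          (∀ i, s i = -1 ∨ s i = 0 ∨ s i = 1) ∧ (∑ i, s i) = 0} : ℚ)))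
        = ∑ k ∈ Finset.range (n + 1), (coeff (R := ℚ) n) (X ^ (2 * k) * M ^ (2 * k + 1)) :=
  grand_motzkin_gf_general M hM
end

section
/- As formal power series, Σ_{k≥0} z^{2k} M(z)^{2k+1} · √(1-2z-3z²) = 1, where M(z) is the Motzkin generating function; equivalently, the square of the Grand Motzkin generating function G(z) = Σ_{k≥0} z^{2k} M(z)^{2k+1} satisfies G(z)² · (1 - 2z - 3z²) = 1. -/
/-!
Writing `q = z²M²`, the terms `z^{2k} M^{2k+1} = q^k M` form a geometric series, so
`(1 - q) G = M`. The Motzkin equation turns `1 - q` into `2 - M + zM`, whose square is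
`M² (1 - 2z - 3z²)`; squaring `(1 - q) G = M` and cancelling `M² ≠ 0` gives the claim.
-/

open PowerSeries

namespace PowerSeries

variable {R : Type*} [CommRing R]

theorem X_pow_dvd_sub_sum_range_geom {q a G : R⟦X⟧} (hq : X ∣ q)
    (hG : ∀ n, coeff n G = ∑ k ∈ Finset.range (n + 1), coeff n (q ^ k * a)) (n : ℕ) :
    X ^ (n + 1) ∣ G - ∑ k ∈ Finset.range (n + 1), q ^ k * a := by
  refine X_pow_dvd_iff.mpr fun m hm => ?_
  rw [map_sub, map_sum, hG m, sub_eq_zero]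
  refine Finset.sum_subset (Finset.range_subset_range.mpr hm) fun k _ hk => ?_
  have hXk : X ^ k ∣ q ^ k * a := (pow_dvd_pow_of_dvd hq k).mul_right a
  exact X_pow_dvd_iff.mp hXk m (by simpa using hk)

theorem one_sub_mul_eq_of_coeff_eq_sum_geom {q a G : R⟦X⟧} (hq : X ∣ q)
    (hG : ∀ n, coeff n G = ∑ k ∈ Finset.range (n + 1), coeff n (q ^ k * a)) :
    (1 - q) * G = a := by
  ext n
  rw [← sub_eq_zero, ← map_sub]
  have hgeom : (1 - q) * ∑ k ∈ Finset.range (n + 1), q ^ k * a = a - q ^ (n + 1) * a := by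
    rw [← Finset.sum_mul, ← mul_assoc, mul_neg_geom_sum]
    ring
  set S := ∑ k ∈ Finset.range (n + 1), q ^ k * a
  have hdvd : X ^ (n + 1) ∣ (1 - q) * G - a :=
    calc X ^ (n + 1) ∣ (1 - q) * (G - S) - q ^ (n + 1) * a :=
          dvd_sub ((X_pow_dvd_sub_sum_range_geom hq hG n).mul_left _)
            ((pow_dvd_pow_of_dvd hq _).mul_right a)
      _ = (1 - q) * G - a := by rw [mul_sub, hgeom]; ring
  exact X_pow_dvd_iff.mp hdvd n n.lt_succ_self

end PowerSeries

theorem sq_one_sub_sq_mul_sq_of_motzkin {R : Type*} [CommRing R] {m x : R}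
    (h : m = 1 + x * m + x ^ 2 * m ^ 2) :
    (1 - x ^ 2 * m ^ 2) ^ 2 = m ^ 2 * (1 - 2 * x - 3 * x ^ 2) := by
  linear_combination (-m + x * m - 1 - x ^ 2 * m ^ 2) * h

theorem grand_motzkin_gf_sq_general
    (M G : PowerSeries ℚ)
    (hM : M = 1 + X * M + X ^ 2 * M ^ 2)
    (hG : ∀ n : ℕ, (coeff n) G
      = ∑ k ∈ Finset.range (n + 1), (coeff n) (X ^ (2 * k) * M ^ (2 * k + 1))) :
    G ^ 2 * (1 - 2 * X - 3 * X ^ 2) = 1 := by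
  have hterm (k : ℕ) :
      (X : PowerSeries ℚ) ^ (2 * k) * M ^ (2 * k + 1) = (X ^ 2 * M ^ 2) ^ k * M := by
    ring
  have hgeom : (1 - X ^ 2 * M ^ 2) * G = M :=
    one_sub_mul_eq_of_coeff_eq_sum_geom (dvd_mul_of_dvd_left (dvd_pow_self X two_ne_zero) _)
      (by simpa only [hterm] using hG)
  have hM_ne : M ≠ 0 := by
    rintro rfl
    simp at hM
  refine mul_left_cancel₀ (pow_ne_zero 2 hM_ne) ?_
  calc M ^ 2 * (G ^ 2 * (1 - 2 * X - 3 * X ^ 2))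
      = (M ^ 2 * (1 - 2 * X - 3 * X ^ 2)) * G ^ 2 := by ring
    _ = ((1 - X ^ 2 * M ^ 2) * G) ^ 2 := by rw [← sq_one_sub_sq_mul_sq_of_motzkin hM]; ring
    _ = M ^ 2 * 1 := by rw [hgeom, mul_one]

/-- The Grand Motzkin generating function G = Σ_{k≥0} z^{2k} M^{2k+1}
satisfies G² · (1 - 2z - 3z²) = 1. -/
theorem grand_motzkin_gf_sq
    (M G : PowerSeries ℚ)
    (hM0 : constantCoeff M = 1)
    (hM : M = 1 + X * M + X ^ 2 * M ^ 2)
    (hG : ∀ n : ℕ, (coeff n) G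
      = ∑ k ∈ Finset.range (n + 1), (coeff n) (X ^ (2 * k) * M ^ (2 * k + 1))) :
    G ^ 2 * (1 - 2 * X - 3 * X ^ 2) = 1 :=
  grand_motzkin_gf_sq_general M G hM hG
end

section
/- The number of Grand Motzkin paths of length n equals the central trinomial coefficient, i.e., the coefficient of z^n in (1+z+z²)^n. -/
open Polynomial Finset

lemma trinomial_expand (n : ℕ) :
    ((1 + X + X ^ 2 : Polynomial ℤ)) ^ n
      = ∑ f : Fin n → Fin 3, X ^ (∑ i, (f i : ℕ)) := by
  have h : (1 + X + X ^ 2 : Polynomial ℤ) = ∑ j : Fin 3, X ^ (j : ℕ) := by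
    rw [Fin.sum_univ_three]
    norm_num
  calc ((1 + X + X ^ 2 : Polynomial ℤ)) ^ n
      = ∏ _i : Fin n, ∑ j : Fin 3, X ^ (j : ℕ) := by
        rw [← h, Finset.prod_const, Finset.card_univ, Fintype.card_fin]
    _ = ∑ f ∈ Fintype.piFinset (fun _ : Fin n => (univ : Finset (Fin 3))),
          ∏ i, X ^ ((f i : ℕ)) := Finset.prod_univ_sum _ _
    _ = ∑ f : Fin n → Fin 3, X ^ (∑ i, (f i : ℕ)) := by
        rw [Fintype.piFinset_univ]
        exact Finset.sum_congr rfl fun f _ => by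
          rw [Finset.prod_pow_eq_pow_sum]

lemma trinomial_coeff (n : ℕ) :
    Polynomial.coeff ((1 + X + X ^ 2 : Polynomial ℤ) ^ n) n
      = (univ.filter (fun f : Fin n → Fin 3 => ∑ i, (f i : ℕ) = n)).card := by
  rw [trinomial_expand, Polynomial.finset_sum_coeff]
  simp only [Polynomial.coeff_X_pow]
  rw [Finset.sum_boole]
  norm_num [eq_comm]

/-- The number of Grand Motzkin paths of length n equals the central trinomial
coefficient [z^n](1+z+z²)^n. -/
theorem grand_motzkin_eq_central_trinomial (n : ℕ) :
    (Nat.card {s : Fin n → ℤ //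
        (∀ i, s i = -1 ∨ s i = 0 ∨ s i = 1) ∧ (∑ i, s i) = 0} : ℤ)
      = Polynomial.coeff ((1 + Polynomial.X + Polynomial.X ^ 2 : Polynomial ℤ) ^ n) n := by
  rw [trinomial_coeff]
  have e : {s : Fin n → ℤ //
        (∀ i, s i = -1 ∨ s i = 0 ∨ s i = 1) ∧ (∑ i, s i) = 0}
      ≃ {f : Fin n → Fin 3 // ∑ i, (f i : ℕ) = n} := by
    refine
      { toFun := fun s => ⟨fun i => ⟨(s.1 i + 1).toNat, ?_⟩, ?_⟩
        invFun := fun f => ⟨fun i => (f.1 i : ℤ) - 1, ?_, ?_⟩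
        left_inv := ?_
        right_inv := ?_ }
    · rcases s.2.1 i with h | h | h <;> simp [h]
    · have hnn : ∀ i, (0 : ℤ) ≤ s.1 i + 1 := by
        intro i; rcases s.2.1 i with h | h | h <;> simp [h]
      have : ((∑ i, ((s.1 i + 1).toNat) : ℕ) : ℤ) = (n : ℤ) := by
        push_cast
        rw [Finset.sum_congr rfl fun i _ => Int.toNat_of_nonneg (hnn i)]
        rw [Finset.sum_add_distrib, s.2.2]
        simp
      exact_mod_cast this
    · intro i
      dsimp only
      have h : ((f.1 i : ℕ) : ℤ) < 3 := by exact_mod_cast (f.1 i).isLt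
      omega
    · have h2 : (∑ i, ((f.1 i : ℕ) : ℤ)) = (n : ℤ) := by exact_mod_cast f.2
      rw [Finset.sum_sub_distrib, h2]
      simp
    · intro s
      ext i
      have hnn : (0 : ℤ) ≤ s.1 i + 1 := by
        rcases s.2.1 i with h | h | h <;> simp [h]
      simp [Int.toNat_of_nonneg hnn]
    · intro f
      ext i
      simp
  rw [Nat.card_congr e, Nat.card_eq_fintype_card, Fintype.card_subtype]
end

section
/- If G(z) ∈ ℚ[[X]] satisfies G(0) = 1 and G(z)² · (1 - 2z - 3z²) = 1, then the n-th coefficient of G is the central trinomial coefficient [z^n](1+z+z²)^n. -/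
/-!
Both `n ↦ [Xⁿ] G` and the central trinomial coefficients `cₙ` satisfy
`(n + 2) a_{n+2} = (2n + 3) a_{n+1} + 3(n + 1) aₙ` with `a₀ = a₁ = 1`, which determines the
sequence. For `G`, differentiating `G² U = 1` with `U = 1 - 2X - 3X²` gives the linear
differential equation `G' U = (1 + 3X) G`, whose coefficients are the recurrence. For `cₙ`, let
`p = 1 + X + X²` and `dₙ = [X^{n+1}] pⁿ`. Since `pⁿ` is palindromic of degree `2n`, expanding
`pⁿ⁺¹ = pⁿ p` gives `c_{n+1} = cₙ + 2dₙ`, and the coefficient of `Xⁿ⁺¹` in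
`(pⁿ⁺¹)' = (n + 1) pⁿ (1 + 2X)` gives `(n + 2) d_{n+1} = (n + 1)(dₙ + 2cₙ)`;
eliminating `d` yields the recurrence.
-/

section Recurrence

variable {R : Type*} [CommRing R]

def CentralTrinomialRecurrence (a : ℕ → R) : Prop :=
  ∀ n : ℕ, (n + 2 : R) * a (n + 2) = (2 * n + 3) * a (n + 1) + 3 * (n + 1) * a n

theorem CentralTrinomialRecurrence.eq [IsDomain R] [CharZero R] {a b : ℕ → R}
    (ha : CentralTrinomialRecurrence a) (hb : CentralTrinomialRecurrence b)
    (h0 : a 0 = b 0) (h1 : a 1 = b 1) : a = b := by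
  have h : ∀ n, a n = b n ∧ a (n + 1) = b (n + 1) := by
    intro n
    induction n with
    | zero => exact ⟨h0, h1⟩
    | succ n ih =>
      have hn : (n + 2 : R) ≠ 0 := by exact_mod_cast (n + 1).succ_ne_zero
      refine ⟨ih.2, mul_left_cancel₀ hn ?_⟩
      rw [ha, hb, ih.1, ih.2]
  exact funext fun n ↦ (h n).1

end Recurrence

namespace Polynomial

variable {R : Type*} [CommRing R]

theorem reflect_pow_of_reflect_eq_self {p : R[X]} {N : ℕ} (hdeg : p.natDegree ≤ N)
    (hp : p.reflect N = p) (n : ℕ) : (p ^ n).reflect (N * n) = p ^ n := by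
  induction n with
  | zero => simp
  | succ n ih =>
    have hdeg_pow : (p ^ n).natDegree ≤ N * n := (natDegree_pow_le_of_le n hdeg).trans_eq
      (mul_comm _ _)
    rw [pow_succ, Nat.mul_succ, reflect_mul _ _ hdeg_pow hdeg, ih, hp]

theorem coeff_pow_sub_of_reflect_eq_self {p : R[X]} {N : ℕ} (hdeg : p.natDegree ≤ N)
    (hp : p.reflect N = p) (n : ℕ) {k : ℕ} (hk : k ≤ N * n) :
    (p ^ n).coeff (N * n - k) = (p ^ n).coeff k := by
  conv_rhs => rw [← reflect_pow_of_reflect_eq_self hdeg hp, coeff_reflect, revAt_le hk]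

theorem natDegree_one_add_X_add_X_sq_le : (1 + X + X ^ 2 : R[X]).natDegree ≤ 2 := by
  compute_degree

theorem reflect_one_add_X_add_X_sq : (1 + X + X ^ 2 : R[X]).reflect 2 = 1 + X + X ^ 2 := by
  ext k
  simp only [coeff_reflect, coeff_add, coeff_one, coeff_X, coeff_X_pow]
  rcases le_or_gt k 2 with hk | hk
  · rw [revAt_le hk]
    interval_cases k <;> simp
  · rw [revAt_eq_self_of_lt hk]

theorem coeff_mul_one_add_X_add_X_sq (f : R[X]) (k : ℕ) :
    (f * (1 + X + X ^ 2)).coeff (k + 2) = f.coeff (k + 2) + f.coeff (k + 1) + f.coeff k := by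
  simp only [mul_add, mul_one, coeff_add, coeff_mul_X, coeff_mul_X_pow]

theorem derivative_one_add_X_add_X_sq : derivative (1 + X + X ^ 2 : R[X]) = 1 + 2 * X := by
  simp only [derivative_one, derivative_X, zero_add, derivative_X_pow_succ,
    Nat.cast_one, map_add, map_one, pow_one, add_right_inj]
  ring

end Polynomial

section CentralTrinomial

open Polynomial

noncomputable def centralTrinomial (R : Type*) [CommRing R] (n : ℕ) : R :=
  ((1 + X + X ^ 2 : R[X]) ^ n).coeff n

variable {R : Type*} [CommRing R]

@[simp]
theorem centralTrinomial_zero : centralTrinomial R 0 = 1 := by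
  simp [centralTrinomial]

@[simp]
theorem centralTrinomial_one : centralTrinomial R 1 = 1 := by
  simp [centralTrinomial, coeff_one]

theorem centralTrinomial_succ (n : ℕ) : centralTrinomial R (n + 1) =
    centralTrinomial R n + 2 * ((1 + X + X ^ 2 : R[X]) ^ n).coeff (n + 1) := by
  rcases n with _ | m
  · simp [coeff_one]
  · have hsymm : ((1 + X + X ^ 2 : R[X]) ^ (m + 1)).coeff m =
        ((1 + X + X ^ 2 : R[X]) ^ (m + 1)).coeff (m + 2) := by
      rw [← coeff_pow_sub_of_reflect_eq_self natDegree_one_add_X_add_X_sq_le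
        reflect_one_add_X_add_X_sq (m + 1) (by omega : m + 2 ≤ 2 * (m + 1))]
      congr 1
      omega
    rw [centralTrinomial, pow_succ, coeff_mul_one_add_X_add_X_sq, hsymm, centralTrinomial]
    ring

theorem add_two_mul_coeff_pow_succ (n : ℕ) :
    (n + 2 : R) * ((1 + X + X ^ 2 : R[X]) ^ (n + 1)).coeff (n + 2) =
      (n + 1) * (((1 + X + X ^ 2 : R[X]) ^ n).coeff (n + 1) + 2 * centralTrinomial R n) := by
  set p : R[X] := 1 + X + X ^ 2
  have hder : derivative (p ^ (n + 1)) =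
      C (n + 1 : R) * p ^ n + C (2 * (n + 1) : R) * (p ^ n * X) := by
    rw [derivative_pow_succ, derivative_one_add_X_add_X_sq, C_mul, map_ofNat]
    ring
  have h := congrArg (coeff · (n + 1)) hder
  simp only [coeff_derivative, coeff_add, coeff_C_mul, coeff_mul_X] at h
  rw [centralTrinomial]
  push_cast at h
  linear_combination h

theorem centralTrinomialRecurrence_centralTrinomial :
    CentralTrinomialRecurrence (centralTrinomial R) := by
  intro n
  linear_combination (n + 2 : R) * centralTrinomial_succ (R := R) (n + 1) +
    2 * add_two_mul_coeff_pow_succ (R := R) n - (n + 1 : R) * centralTrinomial_succ (R := R) n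

end CentralTrinomial

open PowerSeries

namespace PowerSeries

section CommRing

variable {R : Type*} [CommRing R]

theorem coeff_X_mul_derivative (f : R⟦X⟧) (n : ℕ) :
    coeff n (X * d⁄dX R f) = n * coeff n f := by
  rcases n with _ | n
  · simp
  · rw [coeff_succ_X_mul, coeff_derivative]
    push_cast
    ring

theorem coeff_mul_one_sub_two_X_sub_three_X_sq (f : R⟦X⟧) (n : ℕ) :
    coeff (n + 2) (f * (1 - 2 * X - 3 * X ^ 2)) =
      coeff (n + 2) f - 2 * coeff (n + 1) f - 3 * coeff n f := by
  have h2 : f * (2 * X) = C (2 : R) * f * X := by rw [map_ofNat]; ring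
  have h3 : f * (3 * X ^ 2) = C (3 : R) * f * X ^ 2 := by rw [map_ofNat]; ring
  simp only [mul_sub, mul_one, map_sub, h2, h3, coeff_succ_mul_X, coeff_mul_X_pow, coeff_C_mul]

theorem derivative_one_sub_two_X_sub_three_X_sq :
    d⁄dX R (1 - 2 * X - 3 * X ^ 2) = -(2 * (1 + 3 * X)) := by
  rw [← map_ofNat C 2, ← map_ofNat C 3]
  simp only [map_sub, Derivation.map_one_eq_zero, Derivation.leibniz, Derivation.leibniz_pow,
    derivative_X, derivative_C, smul_eq_mul, nsmul_eq_mul]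
  simp only [map_ofNat]
  ring

theorem centralTrinomialRecurrence_coeff {G : R⟦X⟧}
    (hG : d⁄dX R G * (1 - 2 * X - 3 * X ^ 2) = (1 + 3 * X) * G) :
    CentralTrinomialRecurrence (fun n ↦ coeff n G) := by
  intro n
  -- after multiplying by `X`, no index below `n` (hence no truncated `n - 1`) occurs
  have h : coeff (n + 2) (X * d⁄dX R G * (1 - 2 * X - 3 * X ^ 2)) =
      coeff (n + 2) (X * G + C (3 : R) * G * X ^ 2) := by
    rw [mul_assoc, hG, map_ofNat]
    ring_nf
  rw [coeff_mul_one_sub_two_X_sub_three_X_sq, coeff_X_mul_derivative, coeff_X_mul_derivative,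
    coeff_X_mul_derivative, map_add, coeff_succ_X_mul, coeff_mul_X_pow, coeff_C_mul] at h
  push_cast at h
  linear_combination h

theorem coeff_one_eq_coeff_zero {G : R⟦X⟧}
    (hG : d⁄dX R G * (1 - 2 * X - 3 * X ^ 2) = (1 + 3 * X) * G) :
    coeff 1 G = coeff 0 G := by
  have h := congrArg constantCoeff hG
  simp only [map_mul, map_sub, map_add, map_one, map_ofNat, map_pow,
    ← coeff_zero_eq_constantCoeff_apply, coeff_derivative] at h
  simpa using h

end CommRing

theorem derivative_mul_eq_of_sq_mul_eq_one {R : Type*} [CommRing R] [IsDomain R] [CharZero R]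
    {G : R⟦X⟧} (hG : G ^ 2 * (1 - 2 * X - 3 * X ^ 2) = 1) :
    d⁄dX R G * (1 - 2 * X - 3 * X ^ 2) = (1 + 3 * X) * G := by
  have hG_ne : G ≠ 0 := by
    rintro rfl
    simp at hG
  have two_ne : (2 : R⟦X⟧) ≠ 0 := by
    rw [← map_ofNat C 2]
    exact (map_ne_zero_iff C C_injective).mpr two_ne_zero
  have h := congrArg (d⁄dX R) hG
  rw [Derivation.leibniz, Derivation.leibniz_pow, derivative_one_sub_two_X_sub_three_X_sq,
    Derivation.map_one_eq_zero, smul_eq_mul, smul_eq_mul, nsmul_eq_mul] at h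
  have h' : (2 * G) * (d⁄dX R G * (1 - 2 * X - 3 * X ^ 2) - (1 + 3 * X) * G) = 0 := by
    linear_combination h
  exact sub_eq_zero.mp ((mul_eq_zero.mp h').resolve_left (mul_ne_zero two_ne hG_ne))

end PowerSeries

/-- If G(0)=1 and G²(1-2z-3z²)=1, then the n-th coefficient of G is the central
trinomial coefficient [z^n](1+z+z²)^n. -/
theorem coeff_G_eq_central_trinomial
    (G : PowerSeries ℚ)
    (hG0 : constantCoeff G = 1)
    (hG : G ^ 2 * (1 - 2 * X - 3 * X ^ 2) = 1)
    (n : ℕ) :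
    (coeff n) G
      = Polynomial.coeff ((1 + Polynomial.X + Polynomial.X ^ 2 : Polynomial ℚ) ^ n) n := by
  have hode := derivative_mul_eq_of_sq_mul_eq_one hG
  have hcoeff0 : coeff 0 G = 1 := by rw [coeff_zero_eq_constantCoeff_apply, hG0]
  have hcoeff : (fun k ↦ coeff k G) = centralTrinomial ℚ :=
    (centralTrinomialRecurrence_coeff hode).eq centralTrinomialRecurrence_centralTrinomial
      (by rw [hcoeff0, centralTrinomial_zero])
      (by rw [coeff_one_eq_coeff_zero hode, hcoeff0, centralTrinomial_one])
  exact congrFun hcoeff n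
end

section
/- For n ≥ 1 and j ≥ 1, the coefficient of z^n in Q(z)^j equals binom(n-1,3; n-j) - binom(n-1,3; n-j-2), where Q is the power series satisfying Q = z + zQ + zQ² and binom(m,3; k) denotes [z^k](1+z+z²)^m. -/
/-! Since `Q = X (1 + Q + Q²)`, the coefficients `c n j = [X^n] Q^j` satisfy
`c (n+1) (j+1) = c n j + c n (j+1) + c n (j+2)`, and are determined by this recursion together with
`c 0 j = δ_{j0}` and `c (n+1) 0 = 0`. The trinomial side obeys the same recursion because
`(1 + X + X²)^(m+1) = (1 + X + X²) (1 + X + X²)^m`, and it vanishes at `j = 0` because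
`(1 + X + X²)^m` is palindromic of degree `2m`. -/

open PowerSeries

/-- Trinomial coefficient binom(m,3;k) = [z^k](1+z+z²)^m, extended by 0 for k < 0. -/
noncomputable def trinomial (m : ℕ) (k : ℤ) : ℚ :=
  if 0 ≤ k then
    Polynomial.coeff ((1 + Polynomial.X + Polynomial.X ^ 2 : Polynomial ℚ) ^ m) k.toNat
  else 0

open scoped Polynomial

namespace Polynomial

variable {R : Type*} [Semiring R]

def coeffInt (p : R[X]) (k : ℤ) : R :=
  if 0 ≤ k then p.coeff k.toNat else 0

theorem coeffInt_add (p q : R[X]) (k : ℤ) :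
    (p + q).coeffInt k = p.coeffInt k + q.coeffInt k := by
  unfold coeffInt
  split_ifs <;> simp

theorem coeffInt_one (k : ℤ) : (1 : R[X]).coeffInt k = if k = 0 then 1 else 0 := by
  unfold coeffInt
  rw [coeff_one]
  split_ifs <;> first | rfl | omega

theorem coeffInt_X_pow_mul (p : R[X]) (i : ℕ) (k : ℤ) :
    (X ^ i * p).coeffInt k = p.coeffInt (k - i) := by
  unfold coeffInt
  rw [coeff_X_pow_mul']
  split_ifs <;> first | omega | rfl | congr 1; omega

theorem coeffInt_one_add_X_add_X_sq_mul (p : R[X]) (k : ℤ) :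
    ((1 + X + X ^ 2) * p).coeffInt k = p.coeffInt k + p.coeffInt (k - 1) + p.coeffInt (k - 2) := by
  have hsplit : (1 + X + X ^ 2) * p = p + X ^ 1 * p + X ^ 2 * p := by
    simp only [add_mul, one_mul, pow_one]
  simp only [hsplit, coeffInt_add, coeffInt_X_pow_mul, Nat.cast_ofNat, Nat.cast_one]

end Polynomial

theorem trinomial_eq_coeffInt (m : ℕ) (k : ℤ) :
    trinomial m k = ((1 + Polynomial.X + Polynomial.X ^ 2 : ℚ[X]) ^ m).coeffInt k :=
  rfl

theorem trinomial_zero (k : ℤ) : trinomial 0 k = if k = 0 then 1 else 0 := by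
  rw [trinomial_eq_coeffInt, pow_zero, Polynomial.coeffInt_one]

theorem trinomial_succ (m : ℕ) (k : ℤ) :
    trinomial (m + 1) k = trinomial m k + trinomial m (k - 1) + trinomial m (k - 2) := by
  rw [trinomial_eq_coeffInt, pow_succ', Polynomial.coeffInt_one_add_X_add_X_sq_mul]
  rfl

theorem trinomial_symm (m : ℕ) (k : ℤ) : trinomial m (2 * m - k) = trinomial m k := by
  induction m generalizing k with
  | zero =>
    simp only [trinomial_zero]
    congr 1
    simp
  | succ m ih =>
    rw [trinomial_succ, trinomial_succ, ← ih k, ← ih (k - 1), ← ih (k - 2)]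
    push_cast
    ring_nf

noncomputable def trinomialBallot (n j : ℕ) : ℚ :=
  trinomial (n - 1) ((n : ℤ) - j) - trinomial (n - 1) ((n : ℤ) - j - 2)

theorem trinomialBallot_zero_left (j : ℕ) : trinomialBallot 0 j = if j = 0 then 1 else 0 := by
  simp only [trinomialBallot, Nat.zero_sub, trinomial_zero]
  split_ifs <;> first | omega | norm_num

theorem trinomialBallot_succ_zero (n : ℕ) : trinomialBallot (n + 1) 0 = 0 := by
  rw [trinomialBallot, sub_eq_zero, ← trinomial_symm]
  congr 1
  push_cast
  ring

theorem trinomialBallot_succ_succ (n j : ℕ) :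
    trinomialBallot (n + 1) (j + 1)
      = trinomialBallot n j + trinomialBallot n (j + 1) + trinomialBallot n (j + 2) := by
  cases n with
  | zero =>
    simp only [trinomialBallot, Nat.zero_sub, Nat.add_sub_cancel, trinomial_zero]
    split_ifs <;> first | omega | norm_num
  | succ n =>
    simp only [trinomialBallot, Nat.add_sub_cancel, trinomial_succ]
    push_cast
    ring_nf

section PowerSeries

variable {R : Type*} [CommSemiring R] {Q : R⟦X⟧}

theorem coeff_zero_pow_of_constantCoeff_eq_zero (hQ0 : constantCoeff Q = 0) (j : ℕ) :
    coeff 0 (Q ^ j) = if j = 0 then 1 else 0 := by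
  rw [coeff_zero_eq_constantCoeff, map_pow, hQ0, zero_pow_eq]

theorem coeff_succ_pow_succ_of_eq (hQ : Q = X + X * Q + X * Q ^ 2) (n j : ℕ) :
    coeff (n + 1) (Q ^ (j + 1))
      = coeff n (Q ^ j) + coeff n (Q ^ (j + 1)) + coeff n (Q ^ (j + 2)) := by
  have hsplit : Q ^ (j + 1) = X * (Q ^ j + Q ^ (j + 1) + Q ^ (j + 2)) :=
    calc Q ^ (j + 1) = (X + X * Q + X * Q ^ 2) * Q ^ j := by rw [← hQ, pow_succ']
      _ = X * (Q ^ j + Q ^ (j + 1) + Q ^ (j + 2)) := by ring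
  conv_lhs => rw [hsplit]
  rw [coeff_succ_X_mul, map_add, map_add]

end PowerSeries

theorem coeff_Q_pow_general
    (Q : PowerSeries ℚ)
    (hQ0 : constantCoeff Q = 0)
    (hQ : Q = X + X * Q + X * Q ^ 2)
    (n j : ℕ) :
    (coeff n) (Q ^ j)
      = trinomial (n - 1) ((n : ℤ) - j) - trinomial (n - 1) ((n : ℤ) - j - 2) := by
  change coeff n (Q ^ j) = trinomialBallot n j
  induction n generalizing j with
  | zero => rw [coeff_zero_pow_of_constantCoeff_eq_zero hQ0, trinomialBallot_zero_left]
  | succ n ih =>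
    cases j with
    | zero => rw [pow_zero, coeff_one, if_neg n.succ_ne_zero, trinomialBallot_succ_zero]
    | succ j => rw [coeff_succ_pow_succ_of_eq hQ, ih, ih, ih, trinomialBallot_succ_succ]

/-- For n,j ≥ 1, [z^n] Q^j = binom(n-1,3; n-j) - binom(n-1,3; n-j-2). -/
theorem coeff_Q_pow
    (Q : PowerSeries ℚ)
    (hQ0 : constantCoeff Q = 0)
    (hQ : Q = X + X * Q + X * Q ^ 2)
    (n j : ℕ) (hn : 1 ≤ n) (hj : 1 ≤ j) :
    (coeff n) (Q ^ j)
      = trinomial (n - 1) ((n : ℤ) - j) - trinomial (n - 1) ((n : ℤ) - j - 2) :=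
  coeff_Q_pow_general Q hQ0 hQ n j
end

section
/- Under the substitution z = v/(1+v+v²), the power series Q (satisfying Q = z + zQ + zQ²) becomes v: that is, in ℚ[[v]], Q(v/(1+v+v²)) = v. -/
open PowerSeries

/-- Composition g ∘ f of formal power series (meaningful when constantCoeff f = 0):
the n-th coefficient is Σ_{k≤n} (coeff k g) · (coeff n f^k). -/
noncomputable def psComp (g f : PowerSeries ℚ) : PowerSeries ℚ :=
  PowerSeries.mk fun n =>
    ∑ k ∈ Finset.range (n + 1), (coeff k g) * (coeff n (f ^ k))

/-!
`psComp Q f` is Mathlib's substitution `Q.subst f`, a ring homomorphism in `Q`, so with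
`f = X / (1 + X + X²)` both `Q.subst f` and `X` solve `y = f (1 + y + y²)`. Two solutions
`y₁, y₂` of this equation satisfy `(y₁ - y₂) (1 - f (1 + y₁ + y₂)) = 0`, and the second factor
is a unit because `f` has no constant term.
-/

namespace PowerSeries

variable {R : Type*} [CommRing R]

lemma coeff_pow_eq_zero_of_lt {f : R⟦X⟧} (hf : constantCoeff f = 0) {k n : ℕ} (hnk : n < k) :
    coeff n (f ^ k) = 0 := by
  obtain ⟨g, rfl⟩ := X_dvd_iff.mpr hf
  rw [mul_pow, coeff_X_pow_mul', if_neg (not_le.mpr hnk)]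

lemma eq_of_eq_mul_one_add_self_add_sq {f y₁ y₂ : R⟦X⟧} (hf : constantCoeff f = 0)
    (h₁ : y₁ = f * (1 + y₁ + y₁ ^ 2)) (h₂ : y₂ = f * (1 + y₂ + y₂ ^ 2)) : y₁ = y₂ := by
  have hunit : IsUnit (1 - f * (1 + y₁ + y₂)) := by
    rw [isUnit_iff_constantCoeff]
    simp [hf]
  have hfactor : (y₁ - y₂) * (1 - f * (1 + y₁ + y₂)) = 0 := by
    linear_combination h₁ - h₂
  exact sub_eq_zero.mp (hunit.mul_left_eq_zero.mp hfactor)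

end PowerSeries

lemma psComp_eq_subst {f : ℚ⟦X⟧} (hf : constantCoeff f = 0) (g : ℚ⟦X⟧) :
    psComp g f = g.subst f := by
  ext n
  rw [psComp, coeff_mk, coeff_subst' (HasSubst.of_constantCoeff_zero' hf),
    finsum_eq_sum_of_support_subset _ (s := Finset.range (n + 1))]
  · rfl
  · intro k hk
    rw [Finset.coe_range, Set.mem_Iio]
    by_contra! hnk
    exact hk (by simp only [coeff_pow_eq_zero_of_lt hf (by omega : n < k), smul_zero])

theorem Q_subst_eq_general
    (Q : PowerSeries ℚ)
    (hQ : Q = X + X * Q + X * Q ^ 2) :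
    psComp Q (X * (1 + X + X ^ 2)⁻¹) = X := by
  set f : ℚ⟦X⟧ := X * (1 + X + X ^ 2)⁻¹
  have hf0 : constantCoeff f = 0 := by simp [f]
  have hfX : X = f * (1 + X + X ^ 2) := by
    rw [mul_assoc, PowerSeries.inv_mul_cancel _ (by simp), mul_one]
  have hsubst : HasSubst f := HasSubst.of_constantCoeff_zero' hf0
  have hQf : Q.subst f = f * (1 + Q.subst f + Q.subst f ^ 2) := by
    conv_lhs => rw [hQ]
    rw [subst_add hsubst, subst_add hsubst, subst_mul hsubst, subst_mul hsubst,
      subst_pow hsubst, subst_X hsubst]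
    ring
  rw [psComp_eq_subst hf0]
  exact eq_of_eq_mul_one_add_self_add_sq hf0 hQf hfX

/-- Under the substitution z = v/(1+v+v²), the series Q (with Q = z + zQ + zQ², Q(0)=0)
becomes v. -/
theorem Q_subst_eq
    (Q : PowerSeries ℚ)
    (hQ0 : constantCoeff Q = 0)
    (hQ : Q = X + X * Q + X * Q ^ 2) :
    psComp Q (X * (1 + X + X ^ 2)⁻¹) = X :=
  Q_subst_eq_general Q hQ
end

section
/- Every Grand Motzkin path that attains minimum level -k with k ≥ 1 decomposes uniquely as A·B·C, where A is a nonnegative-from-below path from level 0 to level -k touching -k only at its end (i.e., a reversed elevated Motzkin-type prefix ending with a down-step), B is a Motzkin path translated to level -k, and C starts with an up-step from -k and stays strictly above -k after leaving, ending at level 0; consequently the generating function of Grand Motzkin paths with minimum exactly -k is z^{2k} M(z)^{2k+1}. -/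
/-!
A path of minimum level `-(k + 1)` factors uniquely as `P D T U Q` with `D = -1`, `U = 1`: `P` is
the part before the first visit to level `-1` and `Q` the part after the last one, both Motzkin
paths, while `T`, read from level `-1`, has minimum level `-k`. So the generating functions satisfy
`G (k + 1) = z² M² G k` with `G 0 = M`, and `M` is pinned down by `M = 1 + z M + z² M²`, the
first-step decomposition of Motzkin paths. Last passages are first passages of the path traversed
backwards.
-/

open PowerSeries Finset

section OrdinaryGeneratingFunction

variable (R : Type*) [Semiring R] {α β : Type*}

/-- Fibres of `w` that are infinite count as `0`, hence the `FiniteFibers` hypotheses below. -/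
noncomputable def ogf (w : α → ℕ) : R⟦X⟧ := mk fun n => (Nat.card {a // w a = n} : R)

def FiniteFibers (w : α → ℕ) : Prop := ∀ n, Finite {a // w a = n}

variable {R}

@[simp]
lemma coeff_ogf (w : α → ℕ) (n : ℕ) : coeff n (ogf R w) = Nat.card {a // w a = n} :=
  coeff_mk _ _

lemma ogf_congr {wa : α → ℕ} {wb : β → ℕ} (e : α ≃ β) (h : ∀ a, wb (e a) = wa a) :
    ogf R wa = ogf R wb := by
  ext n
  rw [coeff_ogf, coeff_ogf,
    Nat.card_congr (e.subtypeEquiv (p := (wa · = n)) (q := (wb · = n)) fun a => by rw [h a])]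

lemma ogf_unit : ogf R (fun _ : Unit => 0) = 1 := by
  ext n
  rcases n with _ | n <;> simp [coeff_one]

lemma ogf_add_const (w : α → ℕ) (c : ℕ) : ogf R (fun a => w a + c) = X ^ c * ogf R w := by
  ext n
  rw [coeff_X_pow_mul', coeff_ogf]
  split_ifs with h
  · rw [coeff_ogf, Nat.card_congr
      (Equiv.subtypeEquivRight (p := (w · + c = n)) (q := (w · = n - c)) fun a => by omega)]
  · have : IsEmpty {a // w a + c = n} := ⟨fun a => by omega⟩
    simp

lemma ogf_sum {wa : α → ℕ} {wb : β → ℕ} (ha : FiniteFibers wa) (hb : FiniteFibers wb) :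
    ogf R (Sum.elim wa wb) = ogf R wa + ogf R wb := by
  ext n
  have : Finite {a // Sum.elim wa wb (.inl a) = n} := ha n
  have : Finite {b // Sum.elim wa wb (.inr b) = n} := hb n
  simp only [map_add, coeff_ogf]
  rw [Nat.card_congr Equiv.subtypeSum, Nat.card_sum, Nat.cast_add]
  rfl

def prodFiberEquiv (wa : α → ℕ) (wb : β → ℕ) (n : ℕ) :
    {p : α × β // wa p.1 + wb p.2 = n} ≃
      Σ ij : antidiagonal n, {a // wa a = ij.1.1} × {b // wb b = ij.1.2} where
  toFun p := ⟨⟨(wa p.1.1, wb p.1.2), mem_antidiagonal.2 p.2⟩, ⟨p.1.1, rfl⟩, ⟨p.1.2, rfl⟩⟩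
  invFun q := ⟨(q.2.1, q.2.2), by rw [q.2.1.2, q.2.2.2]; exact mem_antidiagonal.1 q.1.2⟩
  right_inv := by
    rintro ⟨⟨⟨i, j⟩, h⟩, ⟨a, rfl : wa a = i⟩, ⟨b, rfl : wb b = j⟩⟩
    rfl

lemma ogf_prod {wa : α → ℕ} {wb : β → ℕ} (ha : FiniteFibers wa) (hb : FiniteFibers wb) :
    ogf R (fun p : α × β => wa p.1 + wb p.2) = ogf R wa * ogf R wb := by
  ext n
  have : ∀ i, Finite {a // wa a = i} := ha
  have : ∀ j, Finite {b // wb b = j} := hb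
  rw [coeff_mul, coeff_ogf, Nat.card_congr (prodFiberEquiv wa wb n), Nat.card_sigma,
    Nat.cast_sum, ← Finset.sum_coe_sort (antidiagonal n)]
  simp only [Nat.card_prod, Nat.cast_mul, coeff_ogf]

lemma FiniteFibers.add_const {w : α → ℕ} (h : FiniteFibers w) (c : ℕ) :
    FiniteFibers (fun a => w a + c) := fun n =>
  have := h (n - c)
  Finite.of_injective
    (fun a : {a // w a + c = n} => (⟨a.1, by have := a.2; omega⟩ : {a // w a = n - c}))
    fun a b hab => Subtype.ext (by simpa using hab)

lemma FiniteFibers.sum {wa : α → ℕ} {wb : β → ℕ} (ha : FiniteFibers wa) (hb : FiniteFibers wb) :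
    FiniteFibers (Sum.elim wa wb) := fun n =>
  have : Finite {a // Sum.elim wa wb (.inl a) = n} := ha n
  have : Finite {b // Sum.elim wa wb (.inr b) = n} := hb n
  Finite.of_equiv _ Equiv.subtypeSum.symm

lemma FiniteFibers.prod {wa : α → ℕ} {wb : β → ℕ} (ha : FiniteFibers wa) (hb : FiniteFibers wb) :
    FiniteFibers (fun p : α × β => wa p.1 + wb p.2) := fun n =>
  have : ∀ i, Finite {a // wa a = i} := ha
  have : ∀ j, Finite {b // wb b = j} := hb
  Finite.of_equiv _ (prodFiberEquiv wa wb n).symm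

end OrdinaryGeneratingFunction

lemma List.finite_setOf_subset_length_eq {α : Type*} (s : List α) (n : ℕ) :
    {l : List α | l ⊆ s ∧ l.length = n}.Finite := by
  have : Finite {x // x ∈ s} := s.finite_toSet.to_subtype
  refine ((List.finite_length_eq {x // x ∈ s} n).image (List.map Subtype.val)).subset ?_
  rintro l ⟨hl, rfl⟩
  lift l to List {x // x ∈ s} using hl
  exact ⟨l, by simp, rfl⟩

lemma Nat.card_subtype_ofFn {α : Type*} (p : List α → Prop) (n : ℕ) :
    Nat.card {s : Fin n → α // p (List.ofFn s)} =
      Nat.card {l : {l // p l} // l.1.length = n} := by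
  refine Nat.card_congr (Equiv.ofBijective (fun s => ⟨⟨List.ofFn s.1, s.2⟩, List.length_ofFn⟩)
    ⟨fun s t h => Subtype.ext (List.ofFn_injective (by simpa using congrArg (·.1.1) h)), ?_⟩)
  rintro ⟨⟨l, hl⟩, rfl⟩
  exact ⟨⟨l.get, by rwa [List.ofFn_get]⟩, by simp [List.ofFn_get]⟩

lemma PowerSeries.eq_of_eq_one_add_X_mul_add_X_sq_mul_sq {R : Type*} [CommRing R] [IsDomain R]
    {F G : R⟦X⟧} (hF : F = 1 + X * F + X ^ 2 * F ^ 2) (hG : G = 1 + X * G + X ^ 2 * G ^ 2) :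
    F = G := by
  have hfactor : (F - G) * (1 - X - X ^ 2 * (F + G)) = 0 := by linear_combination hF - hG
  have hne : 1 - X - X ^ 2 * (F + G) ≠ 0 := fun h => by simpa using congrArg constantCoeff h
  exact sub_eq_zero.1 ((mul_eq_zero.1 hfactor).resolve_right hne)

namespace GrandMotzkin

def level (l : List ℤ) (m : ℕ) : ℤ := (l.take m).sum

@[simp] lemma level_zero (l : List ℤ) : level l 0 = 0 := by
  simp [level]

@[simp] lemma level_cons_succ (x : ℤ) (l : List ℤ) (m : ℕ) :
    level (x :: l) (m + 1) = x + level l m := by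
  simp [level]

def minLevel : List ℤ → ℤ
  | [] => 0
  | x :: l => min 0 (x + minLevel l)

@[simp] lemma minLevel_nil : minLevel [] = 0 := rfl

@[simp] lemma minLevel_cons (x : ℤ) (l : List ℤ) : minLevel (x :: l) = min 0 (x + minLevel l) :=
  rfl

lemma minLevel_nonpos (l : List ℤ) : minLevel l ≤ 0 := by
  cases l <;> simp

lemma minLevel_le_sum (l : List ℤ) : minLevel l ≤ l.sum := by
  induction l with
  | nil => simp
  | cons x l ih => simp; omega

lemma minLevel_append (A B : List ℤ) :
    minLevel (A ++ B) = min (minLevel A) (A.sum + minLevel B) := by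
  induction A with
  | nil => simp [minLevel_nonpos]
  | cons x A ih => simp only [List.cons_append, minLevel_cons, ih, List.sum_cons]; omega

lemma isLeast_range_level (l : List ℤ) : IsLeast (Set.range (level l)) (minLevel l) := by
  induction l with
  | nil => exact ⟨⟨0, rfl⟩, by rintro _ ⟨m, rfl⟩; simp [level]⟩
  | cons x l ih =>
    obtain ⟨⟨m, hm⟩, hle⟩ := ih
    refine ⟨?_, ?_⟩
    · rcases le_total 0 (x + minLevel l) with h | h
      · exact ⟨0, by simp [level, h]⟩
      · exact ⟨m + 1, by rw [level_cons_succ, hm, minLevel_cons]; omega⟩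
    · rintro _ ⟨_ | m, rfl⟩
      · simp
      · have : minLevel l ≤ level l m := hle ⟨m, rfl⟩
        rw [level_cons_succ, minLevel_cons]
        omega

lemma minLevel_eq_iff {l : List ℤ} {a : ℤ} :
    minLevel l = a ↔ (∀ m, a ≤ level l m) ∧ ∃ m, level l m = a := by
  refine ⟨?_, fun ⟨hle, hmem⟩ => (isLeast_range_level l).unique ⟨hmem, ?_⟩⟩
  · rintro rfl
    exact ⟨fun m => (isLeast_range_level l).2 ⟨m, rfl⟩, (isLeast_range_level l).1⟩
  · rintro _ ⟨m, rfl⟩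
    exact hle m

lemma exists_eq_append_neg_one_cons {l : List ℤ} (hl : l ⊆ [-1, 0, 1]) {n : ℕ}
    (h : minLevel l < -n) :
    ∃ A B : List ℤ, l = A ++ -1 :: B ∧ A.sum = -n ∧ minLevel A = -n := by
  induction l generalizing n with
  | nil => simp at h; omega
  | cons x l ih =>
    obtain ⟨hx, htail⟩ := List.cons_subset.1 hl
    simp only [List.mem_cons, List.not_mem_nil, or_false] at hx
    rw [minLevel_cons] at h
    rcases hx with rfl | rfl | rfl
    · cases n with
      | zero => exact ⟨[], l, rfl, rfl, rfl⟩
      | succ n =>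
        obtain ⟨A, B, rfl, hA, hA'⟩ := ih htail (n := n) (by omega)
        exact ⟨-1 :: A, B, rfl, by simp [hA], by simp [hA']⟩
    · obtain ⟨A, B, rfl, hA, hA'⟩ := ih htail (n := n) (by omega)
      exact ⟨0 :: A, B, rfl, by simp [hA], by simp [hA']⟩
    · obtain ⟨A, B, rfl, hA, hA'⟩ := ih htail (n := n + 1) (by omega)
      exact ⟨1 :: A, B, rfl, by simp [hA], by simp [hA']⟩

lemma minLevel_append_neg_one_cons_lt (A C : List ℤ) : minLevel (A ++ -1 :: C) < A.sum := by
  have := minLevel_nonpos C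
  rw [minLevel_append, minLevel_cons]
  omega

lemma append_neg_one_cons_inj {A B A' B' : List ℤ} (h : A ++ -1 :: B = A' ++ -1 :: B')
    (hA : minLevel A = A.sum) (hA' : minLevel A' = A'.sum) (hs : A.sum = A'.sum) :
    A = A' ∧ B = B' := by
  have key {A C B B' : List ℤ} (hmin : minLevel (A ++ C) = A.sum)
      (h : -1 :: B = C ++ -1 :: B') : C = [] ∧ B = B' := by
    rcases C with _ | ⟨y, C⟩
    · simpa using h
    · obtain ⟨rfl, rfl⟩ := List.cons_eq_cons.1 h
      have := minLevel_append_neg_one_cons_lt A C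
      omega
  rcases List.append_eq_append_iff.1 h with ⟨C, rfl, hC⟩ | ⟨C, rfl, hC⟩
  · obtain ⟨rfl, rfl⟩ := key (hA'.trans hs.symm) hC
    simp
  · obtain ⟨rfl, rfl⟩ := key (hA.trans hs) hC
    simp

def reverseNeg (l : List ℤ) : List ℤ := (l.map (- ·)).reverse

lemma reverseNeg_involutive : Function.Involutive reverseNeg := fun l => by
  simp [reverseNeg, List.map_reverse]

@[simp] lemma reverseNeg_cons (x : ℤ) (l : List ℤ) :
    reverseNeg (x :: l) = reverseNeg l ++ [-x] := by
  simp [reverseNeg]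

@[simp] lemma reverseNeg_append (A B : List ℤ) :
    reverseNeg (A ++ B) = reverseNeg B ++ reverseNeg A := by
  simp [reverseNeg]

@[simp] lemma sum_reverseNeg (l : List ℤ) : (reverseNeg l).sum = -l.sum := by
  simp [reverseNeg, List.sum_reverse, ← List.sum_neg]

lemma minLevel_reverseNeg (l : List ℤ) : minLevel (reverseNeg l) = minLevel l - l.sum := by
  induction l with
  | nil => rfl
  | cons x l ih =>
    have := minLevel_nonpos l
    simp only [reverseNeg_cons, minLevel_append, ih, sum_reverseNeg, minLevel_cons, minLevel_nil,
      List.sum_cons]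
    omega

lemma reverseNeg_subset {l : List ℤ} (hl : l ⊆ [-1, 0, 1]) : reverseNeg l ⊆ [-1, 0, 1] := by
  intro x hx
  have : -x ∈ l := by simpa [reverseNeg] using hx
  have := hl this
  simp at this ⊢
  omega

lemma exists_eq_append_one_cons {l : List ℤ} (hl : l ⊆ [-1, 0, 1]) {n : ℕ}
    (h : minLevel l < l.sum - n) :
    ∃ T Q : List ℤ, l = T ++ 1 :: Q ∧ Q.sum = n ∧ minLevel Q = 0 := by
  obtain ⟨A, B, hAB, hA, hA'⟩ := exists_eq_append_neg_one_cons (reverseNeg_subset hl) (n := n)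
    (by rw [minLevel_reverseNeg]; omega)
  refine ⟨reverseNeg B, reverseNeg A, ?_, by simp [hA], by simp [minLevel_reverseNeg, hA, hA']⟩
  rw [← reverseNeg_involutive l, hAB]
  simp

lemma append_one_cons_inj {T Q T' Q' : List ℤ} (h : T ++ 1 :: Q = T' ++ 1 :: Q')
    (hQ : minLevel Q = 0) (hQ' : minLevel Q' = 0) (hs : Q.sum = Q'.sum) : T = T' ∧ Q = Q' := by
  have h' : reverseNeg Q ++ -1 :: reverseNeg T = reverseNeg Q' ++ -1 :: reverseNeg T' := by
    simpa using congrArg reverseNeg h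
  obtain ⟨hQQ, hTT⟩ := append_neg_one_cons_inj h' (by simp [minLevel_reverseNeg, hQ])
    (by simp [minLevel_reverseNeg, hQ']) (by simp [hs])
  exact ⟨reverseNeg_involutive.injective hTT, reverseNeg_involutive.injective hQQ⟩

/-- Motzkin paths are `grandMotzkin 0`. -/
def grandMotzkin (k : ℕ) : Set (List ℤ) := {l | l ⊆ [-1, 0, 1] ∧ l.sum = 0 ∧ minLevel l = -k}

lemma finiteFibers_length (k : ℕ) : FiniteFibers (fun l : grandMotzkin k => l.1.length) := by
  intro n
  have := (List.finite_setOf_subset_length_eq [-1, 0, 1] n).to_subtype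
  exact Finite.of_injective (fun l => (⟨l.1.1, l.1.2.1, l.2⟩ :
    {l : List ℤ | l ⊆ [-1, 0, 1] ∧ l.length = n}))
    fun a b h => Subtype.ext (Subtype.ext (by simpa using h))

def motzkinDecomp : Unit ⊕ (grandMotzkin 0 ⊕ grandMotzkin 0 × grandMotzkin 0) → grandMotzkin 0
  | .inl () => ⟨[], by simp [grandMotzkin]⟩
  | .inr (.inl t) => ⟨0 :: t.1, by
      obtain ⟨hs, hsum, hmin⟩ := t.2
      refine ⟨List.cons_subset.2 ⟨by simp, hs⟩, by simp [hsum], by simp [hmin]⟩⟩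
  | .inr (.inr (A, B)) => ⟨1 :: (A.1 ++ -1 :: B.1), by
      obtain ⟨hAs, hAsum, hAmin⟩ := A.2
      obtain ⟨hBs, hBsum, hBmin⟩ := B.2
      refine ⟨?_, by simp [hAsum, hBsum], by simp [minLevel_append, hAsum, hAmin, hBmin]⟩
      simp [List.cons_subset, List.append_subset, hAs, hBs]⟩

lemma motzkinDecomp_bijective : Function.Bijective motzkinDecomp := by
  constructor
  · rintro (⟨⟩ | t | ⟨A, B⟩) (⟨⟩ | t' | ⟨A', B'⟩) h <;>
      simp only [motzkinDecomp, Subtype.mk.injEq, List.cons.injEq] at h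
    case inr.inr.inr.inr =>
      obtain ⟨-, hAs, hAm⟩ := A.2
      obtain ⟨-, hAs', hAm'⟩ := A'.2
      obtain ⟨hA, hB⟩ := append_neg_one_cons_inj h.2 (by simp [hAs, hAm])
        (by simp [hAs', hAm']) (by rw [hAs, hAs'])
      simp [Subtype.ext_iff, hA, hB]
    all_goals simp_all [Subtype.ext_iff]
  · rintro ⟨_ | ⟨x, t⟩, hs, hsum, hmin⟩
    · exact ⟨.inl (), rfl⟩
    obtain ⟨hx, ht⟩ := List.cons_subset.1 hs
    simp only [List.mem_cons, List.not_mem_nil, or_false] at hx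
    simp only [List.sum_cons, minLevel_cons, CharP.cast_eq_zero, neg_zero] at hsum hmin
    have := minLevel_nonpos t
    rcases hx with rfl | rfl | rfl
    · omega
    · exact ⟨.inr (.inl ⟨t, ht, by omega, by simp; omega⟩), rfl⟩
    · obtain ⟨A, B, rfl, hA, hA'⟩ :=
        exists_eq_append_neg_one_cons ht (n := 0) (by have := minLevel_le_sum t; omega)
      have := minLevel_nonpos B
      simp only [List.append_subset, List.cons_subset] at ht
      simp only [minLevel_append, hA, hA', List.sum_append, List.sum_cons, minLevel_cons]
        at hsum hmin
      exact ⟨.inr (.inr (⟨A, ht.1, hA, hA'⟩, ⟨B, ht.2.2, by omega, by simp; omega⟩)), rfl⟩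

lemma minLevel_wrap {P T Q : List ℤ} (hP : P.sum = 0) (hP' : minLevel P = 0)
    (hQ : minLevel Q = 0) : minLevel (P ++ -1 :: (T ++ 1 :: Q)) = minLevel T - 1 := by
  have := minLevel_nonpos T
  have := minLevel_le_sum T
  simp only [minLevel_append, minLevel_cons, hP, hP', hQ]
  omega

def wrap (k : ℕ) : grandMotzkin 0 × grandMotzkin k × grandMotzkin 0 → grandMotzkin (k + 1) :=
  fun ⟨P, T, Q⟩ => ⟨P.1 ++ -1 :: (T.1 ++ 1 :: Q.1), by
    obtain ⟨hPs, hPsum, hPmin⟩ := P.2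
    obtain ⟨hTs, hTsum, hTmin⟩ := T.2
    obtain ⟨hQs, hQsum, hQmin⟩ := Q.2
    simp only [CharP.cast_eq_zero, neg_zero] at hPmin hQmin
    refine ⟨?_, by simp [hPsum, hTsum, hQsum], ?_⟩
    · simp [List.cons_subset, List.append_subset, hPs, hTs, hQs]
    · rw [minLevel_wrap hPsum hPmin hQmin, hTmin]
      push_cast
      ring⟩

lemma wrap_bijective (k : ℕ) : Function.Bijective (wrap k) := by
  constructor
  · rintro ⟨P, T, Q⟩ ⟨P', T', Q'⟩ h
    simp only [wrap, Subtype.mk.injEq] at h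
    obtain ⟨-, hPs, hPm⟩ := P.2
    obtain ⟨-, hPs', hPm'⟩ := P'.2
    obtain ⟨-, hQs, hQm⟩ := Q.2
    obtain ⟨-, hQs', hQm'⟩ := Q'.2
    obtain ⟨hP, hTQ⟩ := append_neg_one_cons_inj h (by simp [hPs, hPm]) (by simp [hPs', hPm'])
      (by rw [hPs, hPs'])
    obtain ⟨hT, hQ⟩ := append_one_cons_inj hTQ (by simpa using hQm) (by simpa using hQm')
      (by rw [hQs, hQs'])
    simp [Subtype.ext_iff, hP, hT, hQ]
  · rintro ⟨l, hs, hsum, hmin⟩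
    obtain ⟨P, R, rfl, hP, hP'⟩ := exists_eq_append_neg_one_cons hs (n := 0) (by omega)
    simp only [CharP.cast_eq_zero, neg_zero] at hP hP'
    have hR : R.sum = 1 := by simp [hP] at hsum; omega
    have hRmin : minLevel R = -k := by
      have := minLevel_nonpos R
      simp only [minLevel_append, minLevel_cons, hP, hP'] at hmin
      omega
    simp only [List.append_subset, List.cons_subset] at hs
    obtain ⟨T, Q, rfl, hQ, hQ'⟩ := exists_eq_append_one_cons hs.2.2 (n := 0) (by omega)
    simp only [List.append_subset, List.cons_subset] at hs
    rw [minLevel_wrap hP hP' hQ'] at hmin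
    simp only [List.sum_append, List.sum_cons, CharP.cast_eq_zero] at hR hQ
    exact ⟨(⟨P, hs.1, hP, by simpa using hP'⟩,
      ⟨T, hs.2.2.1, by omega, by push_cast at hmin; omega⟩,
      ⟨Q, hs.2.2.2.2, hQ, by simpa using hQ'⟩), rfl⟩

noncomputable def motzkinEquiv :
    Unit ⊕ (grandMotzkin 0 ⊕ grandMotzkin 0 × grandMotzkin 0) ≃ grandMotzkin 0 :=
  Equiv.ofBijective motzkinDecomp motzkinDecomp_bijective

noncomputable def wrapEquiv (k : ℕ) :
    grandMotzkin 0 × grandMotzkin k × grandMotzkin 0 ≃ grandMotzkin (k + 1) :=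
  Equiv.ofBijective (wrap k) (wrap_bijective k)

section GeneratingFunction

variable (R : Type*) [CommSemiring R]

noncomputable def gf (k : ℕ) : R⟦X⟧ := ogf R fun l : grandMotzkin k => l.1.length

lemma gf_zero_eq : gf R 0 = 1 + X * gf R 0 + X ^ 2 * gf R 0 ^ 2 := by
  have hfin := finiteFibers_length 0
  calc gf R 0 = ogf R (Sum.elim (fun _ : Unit => 0)
        (Sum.elim (fun t : grandMotzkin 0 => t.1.length + 1)
          fun p : grandMotzkin 0 × grandMotzkin 0 => p.1.1.length + p.2.1.length + 2)) :=
      (ogf_congr motzkinEquiv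
        (by rintro (⟨⟩ | t | ⟨A, B⟩) <;> simp [motzkinEquiv, motzkinDecomp]; omega)).symm
    _ = _ := by
      unfold gf
      rw [ogf_sum (fun _ => inferInstance)
          ((hfin.add_const 1).sum ((hfin.prod hfin).add_const 2)),
        ogf_sum (hfin.add_const 1) ((hfin.prod hfin).add_const 2), ogf_unit, ogf_add_const,
        ogf_add_const, ogf_prod hfin hfin]
      ring

lemma gf_succ (k : ℕ) : gf R (k + 1) = X ^ 2 * gf R 0 ^ 2 * gf R k := by
  have h0 := finiteFibers_length 0
  have hk := finiteFibers_length k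
  calc gf R (k + 1) = ogf R (fun p : grandMotzkin 0 × grandMotzkin k × grandMotzkin 0 =>
        p.1.1.length + (p.2.1.1.length + p.2.2.1.length) + 2) :=
      (ogf_congr (wrapEquiv k) (by rintro ⟨P, T, Q⟩; simp [wrapEquiv, wrap]; omega)).symm
    _ = _ := by
      unfold gf
      rw [ogf_add_const, ogf_prod h0 (hk.prod h0), ogf_prod hk h0]
      ring

lemma gf_eq (k : ℕ) : gf R k = X ^ (2 * k) * gf R 0 ^ (2 * k + 1) := by
  induction k with
  | zero => simp
  | succ k ih => rw [gf_succ, ih]; ring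

end GeneratingFunction

lemma level_ofFn {n : ℕ} (s : Fin n → ℤ) (m : ℕ) :
    level (List.ofFn s) m = ∑ i ∈ univ.filter (fun i : Fin n => (i : ℕ) < m), s i := by
  induction n generalizing m with
  | zero => simp [level]
  | succ n ih =>
    cases m with
    | zero => simp
    | succ m => simp [List.ofFn_succ, ih, Finset.sum_filter, Fin.sum_univ_succ]

lemma ofFn_mem_grandMotzkin_iff {n : ℕ} (s : Fin n → ℤ) (k : ℕ) :
    List.ofFn s ∈ grandMotzkin k ↔ (∀ i, s i = -1 ∨ s i = 0 ∨ s i = 1) ∧ (∑ i, s i) = 0 ∧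
      (∀ m : ℕ, -(k : ℤ) ≤ ∑ i ∈ univ.filter (fun i : Fin n => (i : ℕ) < m), s i) ∧
      ∃ m : ℕ, ∑ i ∈ univ.filter (fun i : Fin n => (i : ℕ) < m), s i = -(k : ℤ) := by
  simp [grandMotzkin, minLevel_eq_iff, level_ofFn, List.sum_ofFn, List.subset_def]

end GrandMotzkin

theorem grand_motzkin_min_level_gf_general
    (M : PowerSeries ℚ)
    (hM : M = 1 + X * M + X ^ 2 * M ^ 2)
    (k : ℕ) :
    PowerSeries.mk (fun n =>
      (Nat.card {s : Fin n → ℤ //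
        (∀ i, s i = -1 ∨ s i = 0 ∨ s i = 1) ∧
        (∑ i, s i) = 0 ∧
        (∀ m : ℕ, -(k : ℤ) ≤ ∑ i ∈ Finset.univ.filter (fun i : Fin n => (i : ℕ) < m), s i) ∧
        (∃ m : ℕ, (∑ i ∈ Finset.univ.filter (fun i : Fin n => (i : ℕ) < m), s i) = -(k : ℤ))}
        : ℚ)) = X ^ (2 * k) * M ^ (2 * k + 1) := by
  rw [← eq_of_eq_one_add_X_mul_add_X_sq_mul_sq (GrandMotzkin.gf_zero_eq ℚ) hM,
    ← GrandMotzkin.gf_eq]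
  ext n
  simp only [coeff_mk, GrandMotzkin.gf, coeff_ogf, ← GrandMotzkin.ofFn_mem_grandMotzkin_iff,
    Nat.card_subtype_ofFn]

/-- The generating function of Grand Motzkin paths whose minimum level is exactly -k
(k ≥ 1) is z^{2k} M(z)^{2k+1}. -/
theorem grand_motzkin_min_level_gf
    (M : PowerSeries ℚ)
    (hM0 : constantCoeff M = 1)
    (hM : M = 1 + X * M + X ^ 2 * M ^ 2)
    (k : ℕ) (hk : 1 ≤ k) :
    PowerSeries.mk (fun n =>
      (Nat.card {s : Fin n → ℤ //
        (∀ i, s i = -1 ∨ s i = 0 ∨ s i = 1) ∧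
        (∑ i, s i) = 0 ∧
        (∀ m : ℕ, -(k : ℤ) ≤ ∑ i ∈ Finset.univ.filter (fun i : Fin n => (i : ℕ) < m), s i) ∧
        (∃ m : ℕ, (∑ i ∈ Finset.univ.filter (fun i : Fin n => (i : ℕ) < m), s i) = -(k : ℤ))}
        : ℚ)) = X ^ (2 * k) * M ^ (2 * k + 1) :=
  grand_motzkin_min_level_gf_general M hM k
end

section
/- The number of Grand Motzkin paths of length n equals Σ_{k=0}^{⌊n/2⌋} (number of (2k+1)-tuples of Motzkin paths whose lengths sum to n - 2k), summed over all k; i.e., #GrandMotzkin(n) = Σ_{k} Σ_{(n_1,...,n_{2k+1}): Σ n_i = n-2k} M_{n_1}···M_{n_{2k+1}}. -/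
/-!
Let `m` be the generating series of the Motzkin numbers, so that `m = 1 + X m + X² m²`.
The series `B h = (X m)^|h| · m / (1 - X² m²)` satisfy the first-step recursion
`B h = [h = 0] + X (B (h + 1) + B h + B (h - 1))`, which also characterises the generating
series of paths with steps `-1, 0, 1` ending at height `h`; hence the two agree. Expanding
`B 0 = ∑ₖ X^(2k) m^(2k+1)` and extracting the coefficient of `X^n` gives the formula.
-/

open PowerSeries Finset

theorem PowerSeries.coeff_pow_eq_sum_antidiagonalTuple {R : Type*} [CommSemiring R]
    (φ : R⟦X⟧) (j d : ℕ) :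
    coeff d (φ ^ j) = ∑ c ∈ Nat.antidiagonalTuple j d, ∏ i, coeff (c i) φ := by
  rw [← Fin.prod_const, coeff_prod]
  refine sum_equiv Finsupp.equivFunOnFinite ?_ ?_
  · simp [mem_finsuppAntidiag, Nat.mem_antidiagonalTuple]
  · simp

theorem PowerSeries.coeff_eq_sum_of_eq_add_X_sq_mul {R : Type*} [CommSemiring R]
    {f g S : R⟦X⟧} (hS : S = f + X ^ 2 * g * S) (n : ℕ) :
    coeff n S = ∑ k ∈ range (n / 2 + 1), coeff (n - 2 * k) (g ^ k * f) := by
  have hS_iter : ∀ N,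
      S = ∑ k ∈ range N, X ^ (2 * k) * (g ^ k * f) + X ^ (2 * N) * (g ^ N * S) := by
    intro N
    induction N with
    | zero => simp
    | succ N ih =>
      conv_lhs => rw [ih, hS]
      rw [sum_range_succ]
      ring
  rw [hS_iter (n / 2 + 1), map_add, coeff_X_pow_mul', if_neg (by omega), add_zero, map_sum]
  refine sum_congr rfl fun k hk => ?_
  rw [coeff_X_pow_mul', if_pos (by simp at hk; omega)]

section Walks

variable {A : Type*} [AddCommGroup A] [DecidableEq A] (D : Finset A)

def walks (n : ℕ) (h : A) : Finset (Fin n → A) :=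
  {s ∈ Fintype.piFinset fun _ => D | ∑ i, s i = h}

theorem card_walks_zero (h : A) : #(walks D 0 h) = if h = 0 then 1 else 0 := by
  split_ifs with h0 <;> simp [walks, eq_comm, h0]

theorem card_walks_succ (n : ℕ) (h : A) :
    #(walks D (n + 1) h) = ∑ d ∈ D, #(walks D n (h - d)) := by
  rw [card_eq_sum_card_fiberwise (s := walks D (n + 1) h) (f := fun s => s 0) (t := D)
    fun s hs => Fintype.mem_piFinset.mp (mem_filter.mp hs).1 0]
  refine sum_congr rfl fun d hd => card_nbij' Fin.tail (fun s => Fin.cons d s) ?_ ?_ ?_ ?_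
  · intro s hs
    simp only [walks, Fin.sum_univ_succ, coe_filter, mem_filter, Fintype.mem_piFinset,
      Fin.forall_fin_succ, Set.mem_ofPred_eq, Fin.tail] at hs ⊢
    obtain ⟨⟨⟨-, hD⟩, hsum⟩, rfl⟩ := hs
    exact ⟨hD, eq_sub_of_add_eq' hsum⟩
  · intro s hs
    simp only [walks, coe_filter, Fintype.mem_piFinset, Set.mem_ofPred_eq, Fin.sum_univ_succ,
      mem_filter, Fin.forall_fin_succ, Fin.cons_zero, Fin.cons_succ, and_true] at hs ⊢
    exact ⟨⟨hd, hs.1⟩, by rw [hs.2, add_sub_cancel]⟩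
  · intro s hs
    rw [← (mem_filter.mp hs).2]
    exact Fin.cons_self_tail s
  · intro s _
    simp

theorem coeff_eq_card_walks {R : Type*} [CommSemiring R] (B : A → R⟦X⟧)
    (hB : ∀ h, B h = (if h = 0 then 1 else 0) + X * ∑ d ∈ D, B (h - d)) (n : ℕ) (h : A) :
    coeff n (B h) = #(walks D n h) := by
  induction n generalizing h with
  | zero =>
    rw [hB, card_walks_zero]
    split_ifs <;> simp
  | succ n ih =>
    rw [hB, card_walks_succ, map_add, coeff_succ_X_mul, map_sum]
    simp [ih, apply_ite (coeff (n + 1)), coeff_one]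

end Walks

theorem PowerSeries.mk_eq_one_add_X_mul_add_X_sq_mul_sq {R : Type*} [CommSemiring R]
    {a : ℕ → R} (h0 : a 0 = 1)
    (hrec : ∀ n, a (n + 1) = a n + ∑ k ∈ range n, a k * a (n - 1 - k)) :
    mk a = 1 + X * mk a + X ^ 2 * mk a ^ 2 := by
  ext (_ | _ | n)
  · simp [h0]
  · simp [hrec 0, coeff_X_pow_mul']
  · rw [map_add, map_add, coeff_succ_X_mul, coeff_X_pow_mul', if_pos (by omega), sq, coeff_mul,
      Nat.sum_antidiagonal_eq_sum_range_succ_mk, coeff_mk, hrec (n + 1)]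
    simp

section GrandMotzkin

variable {K : Type*} [Field K]

/-- `∑ⱼ X^(2j+|h|) m^(2j+|h|+1)`: a grand Motzkin path ending at height `h` with minimum `-j`
splits into `2j + |h| + 1` Motzkin paths and `2j + |h|` unit steps. -/
noncomputable def grandMotzkinGF (m : K⟦X⟧) (h : ℤ) : K⟦X⟧ :=
  (X * m) ^ h.natAbs * (m * (1 - (X * m) ^ 2)⁻¹)

theorem grandMotzkinGF_zero_eq (m : K⟦X⟧) :
    grandMotzkinGF m 0 = m + X ^ 2 * m ^ 2 * grandMotzkinGF m 0 := by
  have hu := PowerSeries.mul_inv_cancel (1 - (X * m) ^ 2) (by simp)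
  simp only [grandMotzkinGF, Int.natAbs_zero, pow_zero, one_mul]
  linear_combination m * hu

theorem grandMotzkinGF_eq {m : K⟦X⟧} (hm : m = 1 + X * m + X ^ 2 * m ^ 2) (h : ℤ) :
    grandMotzkinGF m h
      = (if h = 0 then 1 else 0)
        + X * ∑ d ∈ ({-1, 0, 1} : Finset ℤ), grandMotzkinGF m (h - d) := by
  set S := m * (1 - (X * m) ^ 2)⁻¹ with hS
  have hu := PowerSeries.mul_inv_cancel (1 - (X * m) ^ 2) (by simp)
  rw [sum_insert (by decide), sum_insert (by decide), sum_singleton]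
  simp only [grandMotzkinGF, ← hS]
  rcases eq_or_ne h 0 with rfl | hh
  · simp only [Int.natAbs_zero, if_true, sub_zero, zero_sub, Int.natAbs_neg, Int.natAbs_one]
    linear_combination (1 - (X * m) ^ 2)⁻¹ * hm + hu
  obtain ⟨a, ha⟩ : ∃ a, h.natAbs = a + 1 :=
    Nat.exists_eq_succ_of_ne_zero (Int.natAbs_ne_zero.mpr hh)
  have off_level : (X * m) ^ (a + 1) * S
      = X * ((X * m) ^ a * S + (X * m) ^ (a + 1) * S + (X * m) ^ (a + 2) * S) := by
    linear_combination X * (X * m) ^ a * S * hm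
  rw [if_neg hh, sub_zero, ha]
  rcases hh.lt_or_gt with hneg | hpos
  · rw [show (h - -1).natAbs = a by omega, show (h - 1).natAbs = a + 2 by omega]
    linear_combination off_level
  · rw [show (h - -1).natAbs = a + 2 by omega, show (h - 1).natAbs = a by omega]
    linear_combination off_level

end GrandMotzkin

/-- The number of Grand Motzkin paths of length n equals the sum over k of the number
of (2k+1)-tuples of Motzkin paths with total length n - 2k, counted by Motzkin numbers. -/
theorem grand_motzkin_count_decomposition
    (M : ℕ → ℕ) (h0 : M 0 = 1)
    (hrec : ∀ n, M (n + 1) = M n + ∑ k ∈ Finset.range n, M k * M (n - 1 - k))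
    (n : ℕ) :
    Nat.card {s : Fin n → ℤ //
        (∀ i, s i = -1 ∨ s i = 0 ∨ s i = 1) ∧ (∑ i, s i) = 0}
      = ∑ k ∈ Finset.range (n / 2 + 1),
          ∑ c ∈ Finset.Nat.antidiagonalTuple (2 * k + 1) (n - 2 * k),
            ∏ i, M (c i) := by
  set m : ℚ⟦X⟧ := mk fun n => (M n : ℚ)
  have hm : m = 1 + X * m + X ^ 2 * m ^ 2 :=
    mk_eq_one_add_X_mul_add_X_sq_mul_sq (by simp [h0]) fun n => by simp [hrec n]
  have hcoeff := coeff_eq_card_walks _ (grandMotzkinGF m) (grandMotzkinGF_eq hm) n 0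
  rw [coeff_eq_sum_of_eq_add_X_sq_mul (grandMotzkinGF_zero_eq m)] at hcoeff
  rw [Nat.card_congr (Equiv.subtypeEquivRight (q := (· ∈ walks ({-1, 0, 1} : Finset ℤ) n 0))
    fun s => by simp [walks]), Nat.card_eq_finsetCard, ← Nat.cast_inj (R := ℚ), ← hcoeff]
  push_cast
  refine sum_congr rfl fun k _ => ?_
  rw [← pow_mul, ← pow_succ, coeff_pow_eq_sum_antidiagonalTuple]
  simp [m]
end
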